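/- arXiv:1708.08034 — 3 statements merged into one kernel-verified Lean document; each statement's English description precedes it below -/
import Mathlib

section
/- Let 0̂ denote the least element of INC(n) (the partition into singletons with every block open). For any (π,S) ∈ INC(n), the Möbius function of INC(n) satisfies: μ(0̂,(π,S)) = (−1)^{n−|S|} if π is an interval partition and every closed block of π is a singleton, and μ(0̂,(π,S)) = 0 otherwise. Here |S| denotes the number of open blocks. -/
open Finset
open scoped Classical

/-- A partition of `Fin n`, given by its (finite) set of blocks. -/
def IsPartition {n : ℕ} (P : Finset (Finset (Fin n))) : Prop :=
  (∀ B ∈ P, B.Nonempty) ∧ ∀ i : Fin n, ∃! B : Finset (Fin n), B ∈ P ∧ i ∈ B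

/-- A partition is non-crossing if there are no two distinct blocks `U, V` and
`i, k ∈ U`, `j, l ∈ V` with `i < j < k < l`. -/
def IsNoncrossing {n : ℕ} (P : Finset (Finset (Fin n))) : Prop :=
  ¬ ∃ U ∈ P, ∃ V ∈ P, U ≠ V ∧ ∃ i ∈ U, ∃ k ∈ U, ∃ j ∈ V, ∃ l ∈ V,
      i < j ∧ j < k ∧ k < l

/-- A block `V` of `P` is outer if there are no block `U ≠ V` of `P` and
elements `i, j ∈ U` with `i < min V` and `max V < j`. -/
def IsOuter {n : ℕ} (P : Finset (Finset (Fin n))) (V : Finset (Fin n)) : Prop :=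
  ¬ ∃ U ∈ P, U ≠ V ∧ ∃ i ∈ U, ∃ j ∈ U, ∀ x ∈ V, i < x ∧ x < j

/-- An interval partition: each block is a set of consecutive integers. -/
def IsIntervalPartition {n : ℕ} (P : Finset (Finset (Fin n))) : Prop :=
  ∀ B ∈ P, ∀ i ∈ B, ∀ j ∈ B, ∀ k : Fin n, i ≤ k → k ≤ j → k ∈ B

/-- The order on incomplete partitions. -/
def IPle {n : ℕ} (p q : Finset (Finset (Fin n)) × Finset (Finset (Fin n))) : Prop :=
  (∀ U ∈ p.1, U ∉ p.2 → U ∈ q.1 ∧ U ∉ q.2) ∧ ∀ B ∈ p.2, ∃ C ∈ q.1, B ⊆ C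

/-- Incomplete non-crossing partitions: pairs `(π, S)` with `π` a non-crossing
partition of `Fin n` and `S` a set of outer blocks of `π`. -/
abbrev INC (n : ℕ) :=
  {p : Finset (Finset (Fin n)) × Finset (Finset (Fin n)) //
    IsPartition p.1 ∧ IsNoncrossing p.1 ∧ p.2 ⊆ p.1 ∧ ∀ B ∈ p.2, IsOuter p.1 B}

-- basic lemmas
lemma part_unique {n : ℕ} {P : Finset (Finset (Fin n))} (hP : IsPartition P)
    {B C : Finset (Fin n)} (hB : B ∈ P) (hC : C ∈ P) {i : Fin n} (hiB : i ∈ B) (hiC : i ∈ C) :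
    B = C := by
  obtain ⟨D, _, hD⟩ := hP.2 i
  rw [hD B ⟨hB, hiB⟩, hD C ⟨hC, hiC⟩]

lemma part_card_le {n : ℕ} {P : Finset (Finset (Fin n))} (hP : IsPartition P) : P.card ≤ n := by
  have hcov : (univ : Finset (Fin n)) = P.biUnion id := by
    ext i
    simp only [mem_univ, mem_biUnion, id, true_iff]
    obtain ⟨B, hB, _⟩ := hP.2 i
    exact ⟨B, hB.1, hB.2⟩
  have hdisj : ∀ B ∈ P, ∀ C ∈ P, B ≠ C → Disjoint (id B) (id C) := by
    intro B hB C hC hne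
    simp only [id]
    rw [Finset.disjoint_left]
    intro x hxB hxC
    exact hne (part_unique hP hB hC hxB hxC)
  have h1 : n = ∑ B ∈ P, B.card := by
    have := Finset.card_biUnion hdisj
    simpa [← hcov] using this
  calc P.card = ∑ _B ∈ P, 1 := by simp
    _ ≤ ∑ B ∈ P, B.card := by
        refine Finset.sum_le_sum ?_
        intro B hB
        exact Finset.card_pos.2 (hP.1 B hB)
    _ = n := h1.symm

lemma interval_noncrossing {n : ℕ} {P : Finset (Finset (Fin n))} (hP : IsPartition P)
    (hI : IsIntervalPartition P) : IsNoncrossing P := by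
  rintro ⟨U, hU, V, hV, hne, i, hi, k, hk, j, hj, l, hl, h1, h2, h3⟩
  have : j ∈ U := hI U hU i hi k hk j h1.le h2.le
  exact hne (part_unique hP hU hV this hj)

lemma interval_outer {n : ℕ} {P : Finset (Finset (Fin n))} (hP : IsPartition P)
    (hI : IsIntervalPartition P) : ∀ V ∈ P, IsOuter P V := by
  intro V hV
  rintro ⟨U, hU, hne, i, hi, j, hj, hx⟩
  obtain ⟨x, hxV⟩ := hP.1 V hV
  have : x ∈ U := hI U hU i hi j hj x (hx x hxV).1.le (hx x hxV).2.le
  exact hne (part_unique hP hU hV this hxV)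

lemma IPle_refl {n : ℕ} (p : INC n) : IPle p.1 p.1 := by
  refine ⟨fun U hU hU2 => ⟨hU, hU2⟩, fun B hB => ⟨B, p.2.2.2.1 hB, subset_rfl⟩⟩

lemma IPle_trans {n : ℕ} {p q r : Finset (Finset (Fin n)) × Finset (Finset (Fin n))}
    (h1 : IPle p q) (h2 : IPle q r) : IPle p r := by
  constructor
  · intro U hU hU2
    obtain ⟨hq1, hq2⟩ := h1.1 U hU hU2
    exact h2.1 U hq1 hq2
  · intro B hB
    obtain ⟨C, hC, hBC⟩ := h1.2 B hB
    by_cases hC2 : C ∈ q.2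
    · obtain ⟨D, hD, hCD⟩ := h2.2 C hC2
      exact ⟨D, hD, hBC.trans hCD⟩
    · exact ⟨C, (h2.1 C hC hC2).1, hBC⟩

lemma IPle_antisymm {n : ℕ} {p q : INC n} (h1 : IPle p.1 q.1) (h2 : IPle q.1 p.1) : p = q := by
  have key : ∀ (a b : INC n), IPle a.1 b.1 → IPle b.1 a.1 → a.1.2 ⊆ b.1.2 := by
    intro a b hab hba B hB
    obtain ⟨C, hC, hBC⟩ := hab.2 B hB
    have hBa1 : B ∈ a.1.1 := a.2.2.2.1 hB
    have hBne : B.Nonempty := a.2.1.1 B hBa1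
    by_cases hC2 : C ∈ b.1.2
    · obtain ⟨E, hE, hCE⟩ := hba.2 C hC2
      obtain ⟨x, hx⟩ := hBne
      have hBE : B = E := part_unique a.2.1 hBa1 hE hx (hCE (hBC hx))
      have hCB : C = B := by
        apply subset_antisymm
        · rw [hBE]; exact hCE
        · exact hBC
      rwa [← hCB]
    · obtain ⟨hCp1, hCp2⟩ := hba.1 C hC hC2
      obtain ⟨x, hx⟩ := hBne
      have : B = C := part_unique a.2.1 hBa1 hCp1 hx (hBC hx)
      exact absurd (this ▸ hB) hCp2
  have h22 : p.1.2 = q.1.2 := subset_antisymm (key p q h1 h2) (key q p h2 h1)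
  have h11 : p.1.1 = q.1.1 := by
    apply subset_antisymm
    · intro U hU
      by_cases hU2 : U ∈ p.1.2
      · exact q.2.2.2.1 (h22 ▸ hU2)
      · exact (h1.1 U hU hU2).1
    · intro U hU
      by_cases hU2 : U ∈ q.1.2
      · exact p.2.2.2.1 (h22 ▸ hU2)
      · exact (h2.1 U hU hU2).1
  exact Subtype.ext (Prod.ext h11 h22)

noncomputable def blockOf {n : ℕ} (P : Finset (Finset (Fin n))) (i : Fin n) : Finset (Fin n) :=
  if h : ∃ B, B ∈ P ∧ i ∈ B then h.choose else ∅

lemma blockOf_eq {n : ℕ} {P : Finset (Finset (Fin n))} (hP : IsPartition P)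
    {D : Finset (Fin n)} (hD : D ∈ P) {i : Fin n} (hi : i ∈ D) : blockOf P i = D := by
  have h : ∃ B, B ∈ P ∧ i ∈ B := ⟨D, hD, hi⟩
  rw [blockOf, dif_pos h]
  exact part_unique hP h.choose_spec.1 hD h.choose_spec.2 hi

lemma blockOf_mem {n : ℕ} {P : Finset (Finset (Fin n))} (hP : IsPartition P) (i : Fin n) :
    blockOf P i ∈ P ∧ i ∈ blockOf P i := by
  obtain ⟨B, ⟨hB, hiB⟩, _⟩ := hP.2 i
  rw [blockOf_eq hP hB hiB]
  exact ⟨hB, hiB⟩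

-- z is least
lemma z_le {n : ℕ} (z : INC n)
    (hz1 : z.1.1 = Finset.univ.image fun i : Fin n => ({i} : Finset (Fin n)))
    (hz2 : z.1.2 = Finset.univ.image fun i : Fin n => ({i} : Finset (Fin n)))
    (τ : INC n) : IPle z.1 τ.1 := by
  constructor
  · intro U hU hU2
    rw [hz1] at hU; rw [hz2] at hU2
    exact absurd hU hU2
  · intro B hB
    rw [hz2] at hB
    simp only [mem_image, mem_univ, true_and] at hB
    obtain ⟨i, rfl⟩ := hB
    obtain ⟨hC1, hC2⟩ := blockOf_mem τ.2.1 i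
    exact ⟨blockOf τ.1.1 i, hC1, Finset.singleton_subset_iff.2 hC2⟩

lemma z_le' {n : ℕ} (z : INC n)
    (hz1 : z.1.1 = Finset.univ.image fun i : Fin n => ({i} : Finset (Fin n)))
    (hz2 : z.1.2 = Finset.univ.image fun i : Fin n => ({i} : Finset (Fin n)))
    (τ : INC n) : IPle z.1 τ.1 := z_le z hz1 hz2 τ

-- if {i0} is a block of p and τ ≤ p then {i0} is a block of τ
lemma singleton_block {n : ℕ} {p τ : INC n} (hle : IPle τ.1 p.1) {i0 : Fin n}
    (h : ({i0} : Finset (Fin n)) ∈ p.1.1) : ({i0} : Finset (Fin n)) ∈ τ.1.1 := by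
  obtain ⟨hBmem, hBi⟩ := blockOf_mem τ.2.1 i0
  set B := blockOf τ.1.1 i0 with hB
  suffices hBs : B = {i0} by rwa [← hBs]
  by_cases hB2 : B ∈ τ.1.2
  · obtain ⟨C, hC, hBC⟩ := hle.2 B hB2
    have : C = {i0} := part_unique p.2.1 hC h (hBC hBi) (Finset.mem_singleton_self i0)
    rw [this] at hBC
    exact subset_antisymm hBC (Finset.singleton_subset_iff.2 hBi)
  · have := (hle.1 B hBmem hB2).1
    exact part_unique p.2.1 this h hBi (Finset.mem_singleton_self i0)

-- the value
def spl {n : ℕ} (τ : INC n) : Prop :=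
  IsIntervalPartition τ.1.1 ∧ ∀ U ∈ τ.1.1, U ∉ τ.1.2 → U.card = 1

noncomputable def fv {n : ℕ} (τ : INC n) : ℤ :=
  if spl τ then (-1) ^ (n - τ.1.2.card) else 0

lemma sign_flip {m k : ℕ} (h : k + 1 ≤ m) :
    ((-1 : ℤ)) ^ (m - k) + (-1) ^ (m - (k + 1)) = 0 := by
  have : m - k = (m - (k + 1)) + 1 := by omega
  rw [this, pow_succ]
  ring

noncomputable def tog1 {n : ℕ} (a : INC n) (i0 : Fin n) (hmem : ({i0} : Finset (Fin n)) ∈ a.1.1)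
    (hout : IsOuter a.1.1 {i0}) : INC n :=
  ⟨(a.1.1, if ({i0} : Finset (Fin n)) ∈ a.1.2 then a.1.2.erase {i0} else insert {i0} a.1.2), by
    refine ⟨a.2.1, a.2.2.1, ?_, ?_⟩
    · split
      · exact (Finset.erase_subset _ _).trans a.2.2.2.1
      · exact Finset.insert_subset hmem a.2.2.2.1
    · intro B hB
      split at hB
      · exact a.2.2.2.2 B (Finset.mem_of_mem_erase hB)
      · rcases Finset.mem_insert.1 hB with rfl | hB
        · exact hout
        · exact a.2.2.2.2 B hB⟩

noncomputable def g1 {n : ℕ} (i0 : Fin n) (a : INC n) : INC n :=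
  if h : spl a ∧ ({i0} : Finset (Fin n)) ∈ a.1.1 then
    tog1 a i0 h.2 (interval_outer a.2.1 h.1.1 _ h.2) else a

lemma g1_eq_self {n : ℕ} {i0 : Fin n} {a : INC n} (h : ¬ spl a) : g1 i0 a = a := by
  rw [g1, dif_neg (fun hc => h hc.1)]

lemma g1_fst {n : ℕ} (i0 : Fin n) (a : INC n) : (g1 i0 a).1.1 = a.1.1 := by
  rw [g1]; split <;> rfl

lemma g1_snd {n : ℕ} {i0 : Fin n} {a : INC n} (hsp : spl a)
    (hmem : ({i0} : Finset (Fin n)) ∈ a.1.1) :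
    (g1 i0 a).1.2 = (if ({i0} : Finset (Fin n)) ∈ a.1.2 then a.1.2.erase {i0}
        else insert {i0} a.1.2) := by
  rw [g1, dif_pos ⟨hsp, hmem⟩]; rfl

lemma g1_spl {n : ℕ} {i0 : Fin n} {a : INC n} (hsp : spl a)
    (hmem : ({i0} : Finset (Fin n)) ∈ a.1.1) : spl (g1 i0 a) := by
  constructor
  · rw [g1_fst]; exact hsp.1
  · intro U hU hU2
    rw [g1_fst] at hU
    rw [g1_snd hsp hmem] at hU2
    by_cases hi2 : ({i0} : Finset (Fin n)) ∈ a.1.2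
    · rw [if_pos hi2] at hU2
      by_cases hUi : U = {i0}
      · rw [hUi]; simp
      · exact hsp.2 U hU (fun hc => hU2 (Finset.mem_erase.2 ⟨hUi, hc⟩))
    · rw [if_neg hi2] at hU2
      exact hsp.2 U hU (fun hc => hU2 (Finset.mem_insert_of_mem hc))

lemma inv1_sum {n : ℕ} (p : INC n) {i0 : Fin n} (h1 : ({i0} : Finset (Fin n)) ∈ p.1.1)
    (h2 : ({i0} : Finset (Fin n)) ∉ p.1.2) :
    ∑ τ ∈ Finset.univ.filter (fun τ : INC n => IPle τ.1 p.1), fv τ = 0 := by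
  refine Finset.sum_involution (fun a _ => g1 i0 a) ?_ ?_ ?_ ?_
  · -- fv a + fv (g1 a) = 0
    intro a ha
    show fv a + fv (g1 i0 a) = 0
    by_cases hsp : spl a
    · have hle : IPle a.1 p.1 := (Finset.mem_filter.1 ha).2
      have hmem : ({i0} : Finset (Fin n)) ∈ a.1.1 := singleton_block hle h1
      have hspg := g1_spl hsp hmem
      have e2 := g1_snd hsp hmem
      rw [fv, fv, if_pos hsp, if_pos hspg]
      have hcn : a.1.2.card ≤ n := le_trans (Finset.card_le_card a.2.2.2.1) (part_card_le a.2.1)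
      by_cases hi2 : ({i0} : Finset (Fin n)) ∈ a.1.2
      · rw [e2, if_pos hi2, Finset.card_erase_of_mem hi2]
        have hc1 : 1 ≤ a.1.2.card := Finset.card_pos.2 ⟨_, hi2⟩
        have hk : a.1.2.card - 1 + 1 ≤ n := by omega
        have := sign_flip (m := n) (k := a.1.2.card - 1) hk
        have hk2 : a.1.2.card - 1 + 1 = a.1.2.card := by omega
        rw [hk2] at this
        linarith [this]
      · rw [e2, if_neg hi2, Finset.card_insert_of_notMem hi2]
        have hcn' : a.1.2.card + 1 ≤ n := by
          have hs : (insert ({i0} : Finset (Fin n)) a.1.2).card ≤ n := by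
            refine le_trans (Finset.card_le_card ?_) (part_card_le a.2.1)
            exact Finset.insert_subset hmem a.2.2.2.1
          rwa [Finset.card_insert_of_notMem hi2] at hs
        exact sign_flip hcn'
    · rw [g1_eq_self hsp, fv, if_neg hsp]; ring
  · -- fv a ≠ 0 → g1 a ≠ a
    intro a ha hf
    show g1 i0 a ≠ a
    have hsp : spl a := by
      by_contra h; rw [fv, if_neg h] at hf; exact hf rfl
    have hle : IPle a.1 p.1 := (Finset.mem_filter.1 ha).2
    have hmem : ({i0} : Finset (Fin n)) ∈ a.1.1 := singleton_block hle h1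
    intro hcontra
    have e2 := g1_snd hsp hmem
    rw [hcontra] at e2
    by_cases hi2 : ({i0} : Finset (Fin n)) ∈ a.1.2
    · rw [if_pos hi2] at e2
      have hni : ({i0} : Finset (Fin n)) ∉ a.1.2.erase {i0} := Finset.notMem_erase _ _
      rw [← e2] at hni; exact hni hi2
    · rw [if_neg hi2] at e2
      have hni : ({i0} : Finset (Fin n)) ∈ insert ({i0} : Finset (Fin n)) a.1.2 :=
        Finset.mem_insert_self _ _
      rw [← e2] at hni; exact hi2 hni
  · -- g1 a ∈ s
    intro a ha
    show g1 i0 a ∈ _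
    have hle : IPle a.1 p.1 := (Finset.mem_filter.1 ha).2
    by_cases hsp : spl a
    · have hmem : ({i0} : Finset (Fin n)) ∈ a.1.1 := singleton_block hle h1
      have e2 := g1_snd hsp hmem
      refine Finset.mem_filter.2 ⟨Finset.mem_univ _, ?_, ?_⟩
      · intro U hU hU2
        rw [g1_fst] at hU
        rw [e2] at hU2
        by_cases hi2 : ({i0} : Finset (Fin n)) ∈ a.1.2
        · rw [if_pos hi2] at hU2
          by_cases hUi : U = {i0}
          · exact hUi ▸ ⟨h1, h2⟩
          · exact hle.1 U hU (fun hc => hU2 (Finset.mem_erase.2 ⟨hUi, hc⟩))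
        · rw [if_neg hi2] at hU2
          exact hle.1 U hU (fun hc => hU2 (Finset.mem_insert_of_mem hc))
      · intro B hB
        rw [e2] at hB
        by_cases hi2 : ({i0} : Finset (Fin n)) ∈ a.1.2
        · rw [if_pos hi2] at hB
          exact hle.2 B (Finset.mem_of_mem_erase hB)
        · rw [if_neg hi2] at hB
          rcases Finset.mem_insert.1 hB with rfl | hB
          · exact ⟨{i0}, h1, subset_rfl⟩
          · exact hle.2 B hB
    · rw [g1_eq_self hsp]; exact ha
  · -- g1 (g1 a) = a
    intro a ha
    show g1 i0 (g1 i0 a) = a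
    by_cases hsp : spl a
    · have hle : IPle a.1 p.1 := (Finset.mem_filter.1 ha).2
      have hmem : ({i0} : Finset (Fin n)) ∈ a.1.1 := singleton_block hle h1
      have hspg := g1_spl hsp hmem
      have hmemg : ({i0} : Finset (Fin n)) ∈ (g1 i0 a).1.1 := by rw [g1_fst]; exact hmem
      have e2 := g1_snd hsp hmem
      have e2' := g1_snd hspg hmemg
      apply Subtype.ext
      apply Prod.ext
      · rw [g1_fst, g1_fst]
      · rw [e2']
        by_cases hi2 : ({i0} : Finset (Fin n)) ∈ a.1.2
        · rw [e2, if_pos hi2]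
          rw [if_neg (Finset.notMem_erase _ _), Finset.insert_erase hi2]
        · rw [e2, if_neg hi2]
          rw [if_pos (Finset.mem_insert_self _ _), Finset.erase_insert hi2]
    · rw [g1_eq_self hsp, g1_eq_self hsp]

lemma split_inc {n : ℕ} (a : INC n) (B L R : Finset (Fin n))
    (hsp : spl a) (hB2 : B ∈ a.1.2)
    (hLR : L ∪ R = B) (hd : Disjoint L R) (hL : L.Nonempty) (hR : R.Nonempty)
    (hLint : ∀ x ∈ L, ∀ y ∈ L, ∀ k : Fin n, x ≤ k → k ≤ y → k ∈ L)
    (hRint : ∀ x ∈ R, ∀ y ∈ R, ∀ k : Fin n, x ≤ k → k ≤ y → k ∈ R) :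
    IsPartition (insert L (insert R (a.1.1.erase B))) ∧
    IsIntervalPartition (insert L (insert R (a.1.1.erase B))) ∧
    IsNoncrossing (insert L (insert R (a.1.1.erase B))) ∧
    insert L (insert R (a.1.2.erase B)) ⊆ insert L (insert R (a.1.1.erase B)) ∧
    ∀ X ∈ insert L (insert R (a.1.2.erase B)),
      IsOuter (insert L (insert R (a.1.1.erase B))) X := by
  have hB1 : B ∈ a.1.1 := a.2.2.2.1 hB2
  have hLB : L ⊆ B := hLR ▸ Finset.subset_union_left
  have hRB : R ⊆ B := hLR ▸ Finset.subset_union_right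
  have hpart : IsPartition (insert L (insert R (a.1.1.erase B))) := by
    constructor
    · intro X hX
      rcases Finset.mem_insert.1 hX with rfl | hX
      · exact hL
      rcases Finset.mem_insert.1 hX with rfl | hX
      · exact hR
      · exact a.2.1.1 X (Finset.mem_of_mem_erase hX)
    · intro i
      by_cases hiB : i ∈ B
      · rcases Finset.mem_union.1 (hLR ▸ hiB) with hiL | hiR
        · refine ⟨L, ⟨Finset.mem_insert_self _ _, hiL⟩, ?_⟩
          rintro D ⟨hD, hiD⟩
          rcases Finset.mem_insert.1 hD with rfl | hD
          · rfl
          rcases Finset.mem_insert.1 hD with rfl | hD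
          · exact absurd hiL (Finset.disjoint_right.1 hd hiD)
          · exact absurd (part_unique a.2.1 (Finset.mem_of_mem_erase hD) hB1 hiD hiB)
              (Finset.ne_of_mem_erase hD)
        · refine ⟨R, ⟨Finset.mem_insert_of_mem (Finset.mem_insert_self _ _), hiR⟩, ?_⟩
          rintro D ⟨hD, hiD⟩
          rcases Finset.mem_insert.1 hD with rfl | hD
          · exact absurd hiR (Finset.disjoint_left.1 hd hiD)
          rcases Finset.mem_insert.1 hD with rfl | hD
          · rfl
          · exact absurd (part_unique a.2.1 (Finset.mem_of_mem_erase hD) hB1 hiD hiB)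
              (Finset.ne_of_mem_erase hD)
      · obtain ⟨hD0, hiD0⟩ := blockOf_mem a.2.1 i
        have hD0B : blockOf a.1.1 i ≠ B := fun h => hiB (h ▸ hiD0)
        refine ⟨blockOf a.1.1 i,
          ⟨Finset.mem_insert_of_mem (Finset.mem_insert_of_mem (Finset.mem_erase.2 ⟨hD0B, hD0⟩)),
            hiD0⟩, ?_⟩
        rintro D ⟨hD, hiD⟩
        rcases Finset.mem_insert.1 hD with rfl | hD
        · exact absurd (hLB hiD) hiB
        rcases Finset.mem_insert.1 hD with rfl | hD
        · exact absurd (hRB hiD) hiB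
        · exact part_unique a.2.1 (Finset.mem_of_mem_erase hD) hD0 hiD hiD0
  have hint : IsIntervalPartition (insert L (insert R (a.1.1.erase B))) := by
    intro X hX
    rcases Finset.mem_insert.1 hX with rfl | hX
    · exact hLint
    rcases Finset.mem_insert.1 hX with rfl | hX
    · exact hRint
    · exact hsp.1 X (Finset.mem_of_mem_erase hX)
  have hsub : insert L (insert R (a.1.2.erase B)) ⊆ insert L (insert R (a.1.1.erase B)) :=
    Finset.insert_subset_insert _ (Finset.insert_subset_insert _
      (Finset.erase_subset_erase _ a.2.2.2.1))
  exact ⟨hpart, hint, interval_noncrossing hpart hint, hsub,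
    fun X hX => interval_outer hpart hint X (hsub hX)⟩

lemma merge_inc {n : ℕ} (a : INC n) (B C : Finset (Fin n))
    (hsp : spl a) (hB2 : B ∈ a.1.2) (hC2 : C ∈ a.1.2) (hne : B ≠ C)
    (hUint : ∀ x ∈ B ∪ C, ∀ y ∈ B ∪ C, ∀ k : Fin n, x ≤ k → k ≤ y → k ∈ B ∪ C) :
    IsPartition (insert (B ∪ C) ((a.1.1.erase B).erase C)) ∧
    IsIntervalPartition (insert (B ∪ C) ((a.1.1.erase B).erase C)) ∧
    IsNoncrossing (insert (B ∪ C) ((a.1.1.erase B).erase C)) ∧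
    insert (B ∪ C) ((a.1.2.erase B).erase C) ⊆ insert (B ∪ C) ((a.1.1.erase B).erase C) ∧
    ∀ X ∈ insert (B ∪ C) ((a.1.2.erase B).erase C),
      IsOuter (insert (B ∪ C) ((a.1.1.erase B).erase C)) X := by
  have hB1 : B ∈ a.1.1 := a.2.2.2.1 hB2
  have hC1 : C ∈ a.1.1 := a.2.2.2.1 hC2
  have hpart : IsPartition (insert (B ∪ C) ((a.1.1.erase B).erase C)) := by
    constructor
    · intro X hX
      rcases Finset.mem_insert.1 hX with rfl | hX
      · exact (a.2.1.1 B hB1).mono Finset.subset_union_left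
      · exact a.2.1.1 X (Finset.mem_of_mem_erase (Finset.mem_of_mem_erase hX))
    · intro i
      by_cases hiU : i ∈ B ∪ C
      · refine ⟨B ∪ C, ⟨Finset.mem_insert_self _ _, hiU⟩, ?_⟩
        rintro D ⟨hD, hiD⟩
        rcases Finset.mem_insert.1 hD with rfl | hD
        · rfl
        · have hD1 : D ∈ a.1.1 := Finset.mem_of_mem_erase (Finset.mem_of_mem_erase hD)
          have hDC : D ≠ C := Finset.ne_of_mem_erase hD
          have hDB : D ≠ B := Finset.ne_of_mem_erase (Finset.mem_of_mem_erase hD)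
          rcases Finset.mem_union.1 hiU with h | h
          · exact absurd (part_unique a.2.1 hD1 hB1 hiD h) hDB
          · exact absurd (part_unique a.2.1 hD1 hC1 hiD h) hDC
      · obtain ⟨hD0, hiD0⟩ := blockOf_mem a.2.1 i
        have hD0B : blockOf a.1.1 i ≠ B := fun h => hiU (Finset.mem_union_left _ (h ▸ hiD0))
        have hD0C : blockOf a.1.1 i ≠ C := fun h => hiU (Finset.mem_union_right _ (h ▸ hiD0))
        refine ⟨blockOf a.1.1 i,
          ⟨Finset.mem_insert_of_mem (Finset.mem_erase.2 ⟨hD0C, Finset.mem_erase.2 ⟨hD0B, hD0⟩⟩),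
            hiD0⟩, ?_⟩
        rintro D ⟨hD, hiD⟩
        rcases Finset.mem_insert.1 hD with rfl | hD
        · exact absurd hiD hiU
        · exact part_unique a.2.1 (Finset.mem_of_mem_erase (Finset.mem_of_mem_erase hD))
            hD0 hiD hiD0
  have hint : IsIntervalPartition (insert (B ∪ C) ((a.1.1.erase B).erase C)) := by
    intro X hX
    rcases Finset.mem_insert.1 hX with rfl | hX
    · exact hUint
    · exact hsp.1 X (Finset.mem_of_mem_erase (Finset.mem_of_mem_erase hX))
  have hsub : insert (B ∪ C) ((a.1.2.erase B).erase C) ⊆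
      insert (B ∪ C) ((a.1.1.erase B).erase C) :=
    Finset.insert_subset_insert _
      (Finset.erase_subset_erase _ (Finset.erase_subset_erase _ a.2.2.2.1))
  exact ⟨hpart, hint, interval_noncrossing hpart hint, hsub,
    fun X hX => interval_outer hpart hint X (hsub hX)⟩

lemma fin_succ_lt {n : ℕ} {i0 j0 : Fin n} (hij : (i0 : ℕ) + 1 = (j0 : ℕ)) : i0 < j0 := by
  rw [Fin.lt_def]; omega

lemma fin_not_le {n : ℕ} {i0 j0 x : Fin n} (hij : (i0 : ℕ) + 1 = (j0 : ℕ))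
    (hx : ¬ x ≤ i0) : j0 ≤ x := by
  rw [Fin.le_def]; rw [Fin.le_def] at hx; omega

-- Split-case: the common block is open
lemma split_facts {n : ℕ} {a : INC n} {i0 j0 : Fin n} (hsp : spl a)
    (hij : (i0 : ℕ) + 1 = (j0 : ℕ)) (heq : blockOf a.1.1 i0 = blockOf a.1.1 j0) :
    blockOf a.1.1 i0 ∈ a.1.2 := by
  by_contra h
  have hB1 := (blockOf_mem a.2.1 i0).1
  have hcard := hsp.2 _ hB1 h
  have hi0 : i0 ∈ blockOf a.1.1 i0 := (blockOf_mem a.2.1 i0).2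
  have hj0 : j0 ∈ blockOf a.1.1 i0 := heq ▸ (blockOf_mem a.2.1 j0).2
  have : 1 < (blockOf a.1.1 i0).card :=
    Finset.one_lt_card.2 ⟨i0, hi0, j0, hj0, Fin.ne_of_lt (fin_succ_lt hij)⟩
  omega

-- Merge-case facts
lemma merge_facts {n : ℕ} {p a : INC n} {i0 j0 : Fin n} (hsp : spl a) (hle : IPle a.1 p.1)
    (hij : (i0 : ℕ) + 1 = (j0 : ℕ)) (hC0 : ∃ C0 ∈ p.1.1, i0 ∈ C0 ∧ j0 ∈ C0)
    (hne : blockOf a.1.1 i0 ≠ blockOf a.1.1 j0) :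
    blockOf a.1.1 i0 ∈ a.1.2 ∧ blockOf a.1.1 j0 ∈ a.1.2 ∧
    (∀ x ∈ blockOf a.1.1 i0, x ≤ i0) ∧ (∀ x ∈ blockOf a.1.1 j0, j0 ≤ x) := by
  obtain ⟨C0, hC0m, hi0C, hj0C⟩ := hC0
  obtain ⟨hB1m, hi0B⟩ := blockOf_mem a.2.1 i0
  obtain ⟨hB2m, hj0B⟩ := blockOf_mem a.2.1 j0
  have key1 : ∀ x ∈ blockOf a.1.1 i0, x ≤ i0 := by
    intro x hx
    by_contra hc
    have hj0le : j0 ≤ x := fin_not_le hij hc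
    have : j0 ∈ blockOf a.1.1 i0 :=
      hsp.1 _ hB1m i0 hi0B x hx j0 (fin_succ_lt hij).le hj0le
    exact hne (blockOf_eq a.2.1 hB1m this).symm
  have key2 : ∀ x ∈ blockOf a.1.1 j0, j0 ≤ x := by
    intro x hx
    by_contra hc
    have hxle : x ≤ i0 := by
      rw [Fin.le_def]; rw [Fin.le_def] at hc; omega
    have : i0 ∈ blockOf a.1.1 j0 :=
      hsp.1 _ hB2m x hx j0 hj0B i0 hxle (fin_succ_lt hij).le
    exact hne (blockOf_eq a.2.1 hB2m this)
  have hB12 : blockOf a.1.1 i0 ∈ a.1.2 := by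
    by_contra h
    obtain ⟨hp1, _⟩ := hle.1 _ hB1m h
    have : blockOf a.1.1 i0 = C0 := part_unique p.2.1 hp1 hC0m hi0B hi0C
    have hj0in : j0 ∈ blockOf a.1.1 i0 := this ▸ hj0C
    exact hne (blockOf_eq a.2.1 hB1m hj0in).symm
  have hB22 : blockOf a.1.1 j0 ∈ a.1.2 := by
    by_contra h
    obtain ⟨hp1, _⟩ := hle.1 _ hB2m h
    have : blockOf a.1.1 j0 = C0 := part_unique p.2.1 hp1 hC0m hj0B hj0C
    have hi0in : i0 ∈ blockOf a.1.1 j0 := this ▸ hi0C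
    exact hne (blockOf_eq a.2.1 hB2m hi0in)
  exact ⟨hB12, hB22, key1, key2⟩

lemma split_inc_spec {n : ℕ} {a : INC n} {i0 j0 : Fin n} (hsp : spl a)
    (hij : (i0 : ℕ) + 1 = (j0 : ℕ)) (hB2 : blockOf a.1.1 i0 ∈ a.1.2)
    (hj0 : j0 ∈ blockOf a.1.1 i0) :
    IsPartition (insert ((blockOf a.1.1 i0).filter (fun x => x ≤ i0))
        (insert ((blockOf a.1.1 i0).filter (fun x => ¬ x ≤ i0))
          (a.1.1.erase (blockOf a.1.1 i0)))) ∧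
    IsIntervalPartition (insert ((blockOf a.1.1 i0).filter (fun x => x ≤ i0))
        (insert ((blockOf a.1.1 i0).filter (fun x => ¬ x ≤ i0))
          (a.1.1.erase (blockOf a.1.1 i0)))) ∧
    IsNoncrossing (insert ((blockOf a.1.1 i0).filter (fun x => x ≤ i0))
        (insert ((blockOf a.1.1 i0).filter (fun x => ¬ x ≤ i0))
          (a.1.1.erase (blockOf a.1.1 i0)))) ∧
    insert ((blockOf a.1.1 i0).filter (fun x => x ≤ i0))
        (insert ((blockOf a.1.1 i0).filter (fun x => ¬ x ≤ i0))
          (a.1.2.erase (blockOf a.1.1 i0))) ⊆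
      insert ((blockOf a.1.1 i0).filter (fun x => x ≤ i0))
        (insert ((blockOf a.1.1 i0).filter (fun x => ¬ x ≤ i0))
          (a.1.1.erase (blockOf a.1.1 i0))) ∧
    ∀ X ∈ insert ((blockOf a.1.1 i0).filter (fun x => x ≤ i0))
        (insert ((blockOf a.1.1 i0).filter (fun x => ¬ x ≤ i0))
          (a.1.2.erase (blockOf a.1.1 i0))),
      IsOuter (insert ((blockOf a.1.1 i0).filter (fun x => x ≤ i0))
        (insert ((blockOf a.1.1 i0).filter (fun x => ¬ x ≤ i0))
          (a.1.1.erase (blockOf a.1.1 i0)))) X := by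
  set B := blockOf a.1.1 i0 with hBdef
  have hBm : B ∈ a.1.1 := (blockOf_mem a.2.1 i0).1
  have hi0B : i0 ∈ B := (blockOf_mem a.2.1 i0).2
  refine split_inc a B _ _ hsp hB2 (Finset.filter_union_filter_not_eq _ _)
    (Finset.disjoint_filter_filter_not B B _)
    ⟨i0, Finset.mem_filter.2 ⟨hi0B, le_refl _⟩⟩
    ⟨j0, Finset.mem_filter.2 ⟨hj0, not_le.2 (fin_succ_lt hij)⟩⟩ ?_ ?_
  · intro x hx y hy k hxk hky
    rw [Finset.mem_filter] at hx hy ⊢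
    exact ⟨hsp.1 B hBm x hx.1 y hy.1 k hxk hky, hky.trans hy.2⟩
  · intro x hx y hy k hxk hky
    rw [Finset.mem_filter] at hx hy ⊢
    refine ⟨hsp.1 B hBm x hx.1 y hy.1 k hxk hky, fun hc => hx.2 (hxk.trans hc)⟩

lemma merge_inc_spec {n : ℕ} {a : INC n} {i0 j0 : Fin n} (hsp : spl a)
    (hij : (i0 : ℕ) + 1 = (j0 : ℕ))
    (hB12 : blockOf a.1.1 i0 ∈ a.1.2) (hB22 : blockOf a.1.1 j0 ∈ a.1.2)
    (hne : blockOf a.1.1 i0 ≠ blockOf a.1.1 j0)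
    (key1 : ∀ x ∈ blockOf a.1.1 i0, x ≤ i0) (key2 : ∀ x ∈ blockOf a.1.1 j0, j0 ≤ x) :
    IsPartition (insert (blockOf a.1.1 i0 ∪ blockOf a.1.1 j0)
        ((a.1.1.erase (blockOf a.1.1 i0)).erase (blockOf a.1.1 j0))) ∧
    IsIntervalPartition (insert (blockOf a.1.1 i0 ∪ blockOf a.1.1 j0)
        ((a.1.1.erase (blockOf a.1.1 i0)).erase (blockOf a.1.1 j0))) ∧
    IsNoncrossing (insert (blockOf a.1.1 i0 ∪ blockOf a.1.1 j0)
        ((a.1.1.erase (blockOf a.1.1 i0)).erase (blockOf a.1.1 j0))) ∧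
    insert (blockOf a.1.1 i0 ∪ blockOf a.1.1 j0)
        ((a.1.2.erase (blockOf a.1.1 i0)).erase (blockOf a.1.1 j0)) ⊆
      insert (blockOf a.1.1 i0 ∪ blockOf a.1.1 j0)
        ((a.1.1.erase (blockOf a.1.1 i0)).erase (blockOf a.1.1 j0)) ∧
    ∀ X ∈ insert (blockOf a.1.1 i0 ∪ blockOf a.1.1 j0)
        ((a.1.2.erase (blockOf a.1.1 i0)).erase (blockOf a.1.1 j0)),
      IsOuter (insert (blockOf a.1.1 i0 ∪ blockOf a.1.1 j0)
        ((a.1.1.erase (blockOf a.1.1 i0)).erase (blockOf a.1.1 j0))) X := by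
  set B1 := blockOf a.1.1 i0 with hB1def
  set B2 := blockOf a.1.1 j0 with hB2def
  have hB1m : B1 ∈ a.1.1 := (blockOf_mem a.2.1 i0).1
  have hB2m : B2 ∈ a.1.1 := (blockOf_mem a.2.1 j0).1
  have hi0B : i0 ∈ B1 := (blockOf_mem a.2.1 i0).2
  have hj0B : j0 ∈ B2 := (blockOf_mem a.2.1 j0).2
  refine merge_inc a B1 B2 hsp hB12 hB22 hne ?_
  intro x hx y hy k hxk hky
  rcases Finset.mem_union.1 hx with hx1 | hx2
  · rcases Finset.mem_union.1 hy with hy1 | hy2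
    · exact Finset.mem_union_left _ (hsp.1 B1 hB1m x hx1 y hy1 k hxk hky)
    · by_cases hk : k ≤ i0
      · exact Finset.mem_union_left _ (hsp.1 B1 hB1m x hx1 i0 hi0B k hxk hk)
      · exact Finset.mem_union_right _
          (hsp.1 B2 hB2m j0 hj0B y hy2 k (fin_not_le hij hk) hky)
  · rcases Finset.mem_union.1 hy with hy1 | hy2
    · exfalso
      have h1 : j0 ≤ x := key2 x hx2
      have h2 : y ≤ i0 := key1 y hy1
      have := (h1.trans hxk).trans (hky.trans h2)
      rw [Fin.le_def] at this; omega
    · exact Finset.mem_union_right _ (hsp.1 B2 hB2m x hx2 y hy2 k hxk hky)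

noncomputable def g2 {n : ℕ} (p : INC n) (i0 j0 : Fin n) (a : INC n) : INC n :=
  if h : spl a ∧ IPle a.1 p.1 ∧ (i0 : ℕ) + 1 = (j0 : ℕ) ∧ ∃ C0 ∈ p.1.1, i0 ∈ C0 ∧ j0 ∈ C0 then
    if heq : blockOf a.1.1 i0 = blockOf a.1.1 j0 then
      ⟨(insert ((blockOf a.1.1 i0).filter (fun x => x ≤ i0))
          (insert ((blockOf a.1.1 i0).filter (fun x => ¬ x ≤ i0))
            (a.1.1.erase (blockOf a.1.1 i0))),
        insert ((blockOf a.1.1 i0).filter (fun x => x ≤ i0))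
          (insert ((blockOf a.1.1 i0).filter (fun x => ¬ x ≤ i0))
            (a.1.2.erase (blockOf a.1.1 i0)))), by
        obtain ⟨hsp, hle, hij, hC0⟩ := h
        obtain ⟨hP, hI, hN, hS, hO⟩ := split_inc_spec hsp hij (split_facts hsp hij heq)
          (heq ▸ (blockOf_mem a.2.1 j0).2)
        exact ⟨hP, hN, hS, hO⟩⟩
    else
      ⟨(insert (blockOf a.1.1 i0 ∪ blockOf a.1.1 j0)
          ((a.1.1.erase (blockOf a.1.1 i0)).erase (blockOf a.1.1 j0)),
        insert (blockOf a.1.1 i0 ∪ blockOf a.1.1 j0)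
          ((a.1.2.erase (blockOf a.1.1 i0)).erase (blockOf a.1.1 j0))), by
        obtain ⟨hsp, hle, hij, hC0⟩ := h
        obtain ⟨h1, h2, h3, h4⟩ := merge_facts hsp hle hij hC0 heq
        obtain ⟨hP, hI, hN, hS, hO⟩ := merge_inc_spec hsp hij h1 h2 heq h3 h4
        exact ⟨hP, hN, hS, hO⟩⟩
  else a

lemma g2_eq_self {n : ℕ} {p : INC n} {i0 j0 : Fin n} {a : INC n}
    (h : ¬ (spl a ∧ IPle a.1 p.1 ∧ (i0 : ℕ) + 1 = (j0 : ℕ) ∧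
      ∃ C0 ∈ p.1.1, i0 ∈ C0 ∧ j0 ∈ C0)) : g2 p i0 j0 a = a := by
  rw [g2, dif_neg h]

lemma g2_val_split {n : ℕ} {p : INC n} {i0 j0 : Fin n} {a : INC n}
    (h : spl a ∧ IPle a.1 p.1 ∧ (i0 : ℕ) + 1 = (j0 : ℕ) ∧
      ∃ C0 ∈ p.1.1, i0 ∈ C0 ∧ j0 ∈ C0)
    (heq : blockOf a.1.1 i0 = blockOf a.1.1 j0) :
    (g2 p i0 j0 a).1 = (insert ((blockOf a.1.1 i0).filter (fun x => x ≤ i0))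
          (insert ((blockOf a.1.1 i0).filter (fun x => ¬ x ≤ i0))
            (a.1.1.erase (blockOf a.1.1 i0))),
        insert ((blockOf a.1.1 i0).filter (fun x => x ≤ i0))
          (insert ((blockOf a.1.1 i0).filter (fun x => ¬ x ≤ i0))
            (a.1.2.erase (blockOf a.1.1 i0)))) := by
  rw [g2, dif_pos h, dif_pos heq]

lemma g2_val_merge {n : ℕ} {p : INC n} {i0 j0 : Fin n} {a : INC n}
    (h : spl a ∧ IPle a.1 p.1 ∧ (i0 : ℕ) + 1 = (j0 : ℕ) ∧
      ∃ C0 ∈ p.1.1, i0 ∈ C0 ∧ j0 ∈ C0)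
    (hne : blockOf a.1.1 i0 ≠ blockOf a.1.1 j0) :
    (g2 p i0 j0 a).1 = (insert (blockOf a.1.1 i0 ∪ blockOf a.1.1 j0)
          ((a.1.1.erase (blockOf a.1.1 i0)).erase (blockOf a.1.1 j0)),
        insert (blockOf a.1.1 i0 ∪ blockOf a.1.1 j0)
          ((a.1.2.erase (blockOf a.1.1 i0)).erase (blockOf a.1.1 j0))) := by
  rw [g2, dif_pos h, dif_neg hne]

lemma erase2_insert2 {α : Type*} [DecidableEq α] {L R : α} {E : Finset α}
    (hLR : L ≠ R) (hL : L ∉ E) (hR : R ∉ E) :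
    ((insert L (insert R E)).erase L).erase R = E := by
  ext x
  simp only [Finset.mem_erase, Finset.mem_insert]
  constructor
  · rintro ⟨hxR, hxL, (rfl | rfl | hx)⟩
    · exact absurd rfl hxL
    · exact absurd rfl hxR
    · exact hx
  · intro hx
    exact ⟨fun h => hR (h ▸ hx), fun h => hL (h ▸ hx), Or.inr (Or.inr hx)⟩

lemma split_notMem {n : ℕ} {a : INC n} {i0 j0 : Fin n}
    (hij : (i0 : ℕ) + 1 = (j0 : ℕ)) (hj0 : j0 ∈ blockOf a.1.1 i0) :
    (blockOf a.1.1 i0).filter (fun x => x ≤ i0) ∉ a.1.1 ∧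
    (blockOf a.1.1 i0).filter (fun x => ¬ x ≤ i0) ∉ a.1.1 ∧
    (blockOf a.1.1 i0).filter (fun x => x ≤ i0) ≠
      (blockOf a.1.1 i0).filter (fun x => ¬ x ≤ i0) := by
  have hBm : blockOf a.1.1 i0 ∈ a.1.1 := (blockOf_mem a.2.1 i0).1
  have hi0B : i0 ∈ blockOf a.1.1 i0 := (blockOf_mem a.2.1 i0).2
  have hi0L : i0 ∈ (blockOf a.1.1 i0).filter (fun x => x ≤ i0) :=
    Finset.mem_filter.2 ⟨hi0B, le_refl _⟩
  have hj0nL : j0 ∉ (blockOf a.1.1 i0).filter (fun x => x ≤ i0) := by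
    rw [Finset.mem_filter]
    rintro ⟨_, hc⟩
    exact absurd hc (not_le.2 (fin_succ_lt hij))
  have hi0nR : i0 ∉ (blockOf a.1.1 i0).filter (fun x => ¬ x ≤ i0) := by
    rw [Finset.mem_filter]
    rintro ⟨_, hc⟩
    exact hc (le_refl _)
  have hj0R : j0 ∈ (blockOf a.1.1 i0).filter (fun x => ¬ x ≤ i0) :=
    Finset.mem_filter.2 ⟨hj0, not_le.2 (fin_succ_lt hij)⟩
  refine ⟨?_, ?_, ?_⟩
  · intro hc
    have heq2 := part_unique a.2.1 hc hBm hi0L hi0B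
    exact hj0nL (by rw [heq2]; exact hj0)
  · intro hc
    have heq2 := part_unique a.2.1 hc hBm hj0R hj0
    exact hi0nR (by rw [heq2]; exact hi0B)
  · intro hc
    exact hi0nR (hc ▸ hi0L)

lemma merge_not_mem {n : ℕ} {a : INC n} {i0 j0 : Fin n}
    (hne : blockOf a.1.1 i0 ≠ blockOf a.1.1 j0) :
    blockOf a.1.1 i0 ∪ blockOf a.1.1 j0 ∉ a.1.1 := by
  intro hc
  have hB1m : blockOf a.1.1 i0 ∈ a.1.1 := (blockOf_mem a.2.1 i0).1
  have hi0B : i0 ∈ blockOf a.1.1 i0 := (blockOf_mem a.2.1 i0).2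
  have hj0B : j0 ∈ blockOf a.1.1 j0 := (blockOf_mem a.2.1 j0).2
  have h1 : blockOf a.1.1 i0 ∪ blockOf a.1.1 j0 = blockOf a.1.1 i0 :=
    part_unique a.2.1 hc hB1m (Finset.mem_union_left _ hi0B) hi0B
  have hj0in : j0 ∈ blockOf a.1.1 i0 := h1 ▸ Finset.mem_union_right _ hj0B
  exact hne (blockOf_eq a.2.1 hB1m hj0in).symm

lemma g2_spl {n : ℕ} {p : INC n} {i0 j0 : Fin n} {a : INC n}
    (h : spl a ∧ IPle a.1 p.1 ∧ (i0 : ℕ) + 1 = (j0 : ℕ) ∧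
      ∃ C0 ∈ p.1.1, i0 ∈ C0 ∧ j0 ∈ C0) : spl (g2 p i0 j0 a) := by
  obtain ⟨hsp, hle, hij, hC0⟩ := h
  by_cases heq : blockOf a.1.1 i0 = blockOf a.1.1 j0
  · have hval := g2_val_split ⟨hsp, hle, hij, hC0⟩ heq
    obtain ⟨hP, hI, hN, hS, hO⟩ := split_inc_spec hsp hij (split_facts hsp hij heq)
      (heq ▸ (blockOf_mem a.2.1 j0).2)
    constructor
    · rw [hval]; exact hI
    · rw [hval]
      intro U hU hU2
      simp only at hU hU2
      have hUL : U ≠ (blockOf a.1.1 i0).filter (fun x => x ≤ i0) := by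
        rintro rfl; exact hU2 (Finset.mem_insert_self _ _)
      have hUR : U ≠ (blockOf a.1.1 i0).filter (fun x => ¬ x ≤ i0) := by
        rintro rfl; exact hU2 (Finset.mem_insert_of_mem (Finset.mem_insert_self _ _))
      rcases Finset.mem_insert.1 hU with rfl | hU
      · exact absurd rfl hUL
      rcases Finset.mem_insert.1 hU with rfl | hU
      · exact absurd rfl hUR
      · refine hsp.2 U (Finset.mem_of_mem_erase hU) (fun hc => ?_)
        exact hU2 (Finset.mem_insert_of_mem (Finset.mem_insert_of_mem
          (Finset.mem_erase.2 ⟨Finset.ne_of_mem_erase hU, hc⟩)))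
  · have hval := g2_val_merge ⟨hsp, hle, hij, hC0⟩ heq
    obtain ⟨h1, h2, h3, h4⟩ := merge_facts hsp hle hij hC0 heq
    obtain ⟨hP, hI, hN, hS, hO⟩ := merge_inc_spec hsp hij h1 h2 heq h3 h4
    constructor
    · rw [hval]; exact hI
    · rw [hval]
      intro U hU hU2
      simp only at hU hU2
      have hUM : U ≠ blockOf a.1.1 i0 ∪ blockOf a.1.1 j0 := by
        rintro rfl; exact hU2 (Finset.mem_insert_self _ _)
      rcases Finset.mem_insert.1 hU with rfl | hU
      · exact absurd rfl hUM
      · refine hsp.2 U (Finset.mem_of_mem_erase (Finset.mem_of_mem_erase hU))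
          (fun hc => ?_)
        exact hU2 (Finset.mem_insert_of_mem (Finset.mem_erase.2
          ⟨Finset.ne_of_mem_erase hU,
            Finset.mem_erase.2 ⟨Finset.ne_of_mem_erase (Finset.mem_of_mem_erase hU), hc⟩⟩))

lemma g2_mem {n : ℕ} {p : INC n} {i0 j0 : Fin n} {a : INC n}
    (h : spl a ∧ IPle a.1 p.1 ∧ (i0 : ℕ) + 1 = (j0 : ℕ) ∧
      ∃ C0 ∈ p.1.1, i0 ∈ C0 ∧ j0 ∈ C0) : IPle (g2 p i0 j0 a).1 p.1 := by
  obtain ⟨hsp, hle, hij, hC0⟩ := h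
  by_cases heq : blockOf a.1.1 i0 = blockOf a.1.1 j0
  · have hval := g2_val_split ⟨hsp, hle, hij, hC0⟩ heq
    have hB2 : blockOf a.1.1 i0 ∈ a.1.2 := split_facts hsp hij heq
    constructor
    · rw [hval]
      intro U hU hU2
      simp only at hU hU2
      have hUL : U ≠ (blockOf a.1.1 i0).filter (fun x => x ≤ i0) := by
        rintro rfl; exact hU2 (Finset.mem_insert_self _ _)
      have hUR : U ≠ (blockOf a.1.1 i0).filter (fun x => ¬ x ≤ i0) := by
        rintro rfl; exact hU2 (Finset.mem_insert_of_mem (Finset.mem_insert_self _ _))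
      rcases Finset.mem_insert.1 hU with rfl | hU
      · exact absurd rfl hUL
      rcases Finset.mem_insert.1 hU with rfl | hU
      · exact absurd rfl hUR
      · refine hle.1 U (Finset.mem_of_mem_erase hU) (fun hc => ?_)
        exact hU2 (Finset.mem_insert_of_mem (Finset.mem_insert_of_mem
          (Finset.mem_erase.2 ⟨Finset.ne_of_mem_erase hU, hc⟩)))
    · rw [hval]
      intro X hX
      simp only at hX
      obtain ⟨C, hC, hBC⟩ := hle.2 _ hB2
      rcases Finset.mem_insert.1 hX with rfl | hX
      · exact ⟨C, hC, (Finset.filter_subset _ _).trans hBC⟩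
      rcases Finset.mem_insert.1 hX with rfl | hX
      · exact ⟨C, hC, (Finset.filter_subset _ _).trans hBC⟩
      · exact hle.2 X (Finset.mem_of_mem_erase hX)
  · have hval := g2_val_merge ⟨hsp, hle, hij, hC0⟩ heq
    obtain ⟨h1, h2, h3, h4⟩ := merge_facts hsp hle hij hC0 heq
    obtain ⟨C0, hC0m, hi0C, hj0C⟩ := hC0
    constructor
    · rw [hval]
      intro U hU hU2
      simp only at hU hU2
      have hUM : U ≠ blockOf a.1.1 i0 ∪ blockOf a.1.1 j0 := by
        rintro rfl; exact hU2 (Finset.mem_insert_self _ _)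
      rcases Finset.mem_insert.1 hU with rfl | hU
      · exact absurd rfl hUM
      · refine hle.1 U (Finset.mem_of_mem_erase (Finset.mem_of_mem_erase hU))
          (fun hc => ?_)
        exact hU2 (Finset.mem_insert_of_mem (Finset.mem_erase.2
          ⟨Finset.ne_of_mem_erase hU,
            Finset.mem_erase.2 ⟨Finset.ne_of_mem_erase (Finset.mem_of_mem_erase hU), hc⟩⟩))
    · rw [hval]
      intro X hX
      simp only at hX
      rcases Finset.mem_insert.1 hX with rfl | hX
      · obtain ⟨C, hC, hBC⟩ := hle.2 _ h1
        obtain ⟨C', hC', hBC'⟩ := hle.2 _ h2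
        have e1 : C = C0 := part_unique p.2.1 hC hC0m (hBC (blockOf_mem a.2.1 i0).2) hi0C
        have e2 : C' = C0 := part_unique p.2.1 hC' hC0m (hBC' (blockOf_mem a.2.1 j0).2) hj0C
        refine ⟨C0, hC0m, Finset.union_subset (e1 ▸ hBC) (e2 ▸ hBC')⟩
      · exact hle.2 X (Finset.mem_of_mem_erase (Finset.mem_of_mem_erase hX))

lemma g2_card_split {n : ℕ} {p : INC n} {i0 j0 : Fin n} {a : INC n}
    (h : spl a ∧ IPle a.1 p.1 ∧ (i0 : ℕ) + 1 = (j0 : ℕ) ∧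
      ∃ C0 ∈ p.1.1, i0 ∈ C0 ∧ j0 ∈ C0)
    (heq : blockOf a.1.1 i0 = blockOf a.1.1 j0) :
    (g2 p i0 j0 a).1.2.card = a.1.2.card + 1 := by
  obtain ⟨hsp, hle, hij, hC0⟩ := h
  have hval := g2_val_split ⟨hsp, hle, hij, hC0⟩ heq
  have hj0 : j0 ∈ blockOf a.1.1 i0 := heq ▸ (blockOf_mem a.2.1 j0).2
  obtain ⟨hLna, hRna, hLRne⟩ := split_notMem hij hj0
  have hB2 : blockOf a.1.1 i0 ∈ a.1.2 := split_facts hsp hij heq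
  have hLn2 : (blockOf a.1.1 i0).filter (fun x => x ≤ i0) ∉
      a.1.2.erase (blockOf a.1.1 i0) :=
    fun hc => hLna (a.2.2.2.1 (Finset.mem_of_mem_erase hc))
  have hRn2 : (blockOf a.1.1 i0).filter (fun x => ¬ x ≤ i0) ∉
      a.1.2.erase (blockOf a.1.1 i0) :=
    fun hc => hRna (a.2.2.2.1 (Finset.mem_of_mem_erase hc))
  have hLni : (blockOf a.1.1 i0).filter (fun x => x ≤ i0) ∉
      insert ((blockOf a.1.1 i0).filter (fun x => ¬ x ≤ i0))
        (a.1.2.erase (blockOf a.1.1 i0)) := by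
    rw [Finset.mem_insert]
    rintro (hc | hc)
    · exact hLRne hc
    · exact hLn2 hc
  have hc1 : 1 ≤ a.1.2.card := Finset.card_pos.2 ⟨_, hB2⟩
  have : (g2 p i0 j0 a).1.2 = insert ((blockOf a.1.1 i0).filter (fun x => x ≤ i0))
      (insert ((blockOf a.1.1 i0).filter (fun x => ¬ x ≤ i0))
        (a.1.2.erase (blockOf a.1.1 i0))) := by rw [hval]
  rw [this, Finset.card_insert_of_notMem hLni, Finset.card_insert_of_notMem hRn2,
    Finset.card_erase_of_mem hB2]
  omega

lemma g2_card_merge {n : ℕ} {p : INC n} {i0 j0 : Fin n} {a : INC n}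
    (h : spl a ∧ IPle a.1 p.1 ∧ (i0 : ℕ) + 1 = (j0 : ℕ) ∧
      ∃ C0 ∈ p.1.1, i0 ∈ C0 ∧ j0 ∈ C0)
    (hne : blockOf a.1.1 i0 ≠ blockOf a.1.1 j0) :
    (g2 p i0 j0 a).1.2.card + 1 = a.1.2.card := by
  obtain ⟨hsp, hle, hij, hC0⟩ := h
  have hval := g2_val_merge ⟨hsp, hle, hij, hC0⟩ hne
  obtain ⟨h1, h2, _, _⟩ := merge_facts hsp hle hij hC0 hne
  have hMna : blockOf a.1.1 i0 ∪ blockOf a.1.1 j0 ∉ a.1.1 := merge_not_mem hne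
  have hMn2 : blockOf a.1.1 i0 ∪ blockOf a.1.1 j0 ∉
      (a.1.2.erase (blockOf a.1.1 i0)).erase (blockOf a.1.1 j0) :=
    fun hc => hMna (a.2.2.2.1 (Finset.mem_of_mem_erase (Finset.mem_of_mem_erase hc)))
  have hB2e : blockOf a.1.1 j0 ∈ a.1.2.erase (blockOf a.1.1 i0) :=
    Finset.mem_erase.2 ⟨fun hc => hne hc.symm, h2⟩
  have hc2 : 2 ≤ a.1.2.card := by
    have := Finset.one_lt_card.2 ⟨_, h1, _, h2, hne⟩
    omega
  have : (g2 p i0 j0 a).1.2 = insert (blockOf a.1.1 i0 ∪ blockOf a.1.1 j0)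
      ((a.1.2.erase (blockOf a.1.1 i0)).erase (blockOf a.1.1 j0)) := by rw [hval]
  rw [this, Finset.card_insert_of_notMem hMn2, Finset.card_erase_of_mem hB2e,
    Finset.card_erase_of_mem h1]
  omega

lemma g2_invol {n : ℕ} {p : INC n} {i0 j0 : Fin n} {a : INC n}
    (h : spl a ∧ IPle a.1 p.1 ∧ (i0 : ℕ) + 1 = (j0 : ℕ) ∧
      ∃ C0 ∈ p.1.1, i0 ∈ C0 ∧ j0 ∈ C0) :
    g2 p i0 j0 (g2 p i0 j0 a) = a := by
  obtain ⟨hsp, hle, hij, hC0⟩ := h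
  have cond' : spl (g2 p i0 j0 a) ∧ IPle (g2 p i0 j0 a).1 p.1 ∧
      (i0 : ℕ) + 1 = (j0 : ℕ) ∧ ∃ C0 ∈ p.1.1, i0 ∈ C0 ∧ j0 ∈ C0 :=
    ⟨g2_spl ⟨hsp, hle, hij, hC0⟩, g2_mem ⟨hsp, hle, hij, hC0⟩, hij, hC0⟩
  have hBm : blockOf a.1.1 i0 ∈ a.1.1 := (blockOf_mem a.2.1 i0).1
  have hi0B : i0 ∈ blockOf a.1.1 i0 := (blockOf_mem a.2.1 i0).2
  have hB2m : blockOf a.1.1 j0 ∈ a.1.1 := (blockOf_mem a.2.1 j0).1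
  have hj0B2 : j0 ∈ blockOf a.1.1 j0 := (blockOf_mem a.2.1 j0).2
  by_cases heq : blockOf a.1.1 i0 = blockOf a.1.1 j0
  · -- split, then merge back
    have hval := g2_val_split ⟨hsp, hle, hij, hC0⟩ heq
    have hj0 : j0 ∈ blockOf a.1.1 i0 := heq ▸ hj0B2
    obtain ⟨hLna, hRna, hLRne⟩ := split_notMem hij hj0
    have hB2 : blockOf a.1.1 i0 ∈ a.1.2 := split_facts hsp hij heq
    have hfst : (g2 p i0 j0 a).1.1 =
        insert ((blockOf a.1.1 i0).filter (fun x => x ≤ i0))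
          (insert ((blockOf a.1.1 i0).filter (fun x => ¬ x ≤ i0))
            (a.1.1.erase (blockOf a.1.1 i0))) := by rw [hval]
    have hsnd : (g2 p i0 j0 a).1.2 =
        insert ((blockOf a.1.1 i0).filter (fun x => x ≤ i0))
          (insert ((blockOf a.1.1 i0).filter (fun x => ¬ x ≤ i0))
            (a.1.2.erase (blockOf a.1.1 i0))) := by rw [hval]
    have hi0L : i0 ∈ (blockOf a.1.1 i0).filter (fun x => x ≤ i0) :=
      Finset.mem_filter.2 ⟨hi0B, le_refl _⟩
    have hj0R : j0 ∈ (blockOf a.1.1 i0).filter (fun x => ¬ x ≤ i0) :=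
      Finset.mem_filter.2 ⟨hj0, not_le.2 (fin_succ_lt hij)⟩
    have bi' : blockOf (g2 p i0 j0 a).1.1 i0 =
        (blockOf a.1.1 i0).filter (fun x => x ≤ i0) :=
      blockOf_eq (g2 p i0 j0 a).2.1 (by rw [hfst]; exact Finset.mem_insert_self _ _) hi0L
    have bj' : blockOf (g2 p i0 j0 a).1.1 j0 =
        (blockOf a.1.1 i0).filter (fun x => ¬ x ≤ i0) :=
      blockOf_eq (g2 p i0 j0 a).2.1
        (by rw [hfst]; exact Finset.mem_insert_of_mem (Finset.mem_insert_self _ _)) hj0R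
    have hne' : blockOf (g2 p i0 j0 a).1.1 i0 ≠ blockOf (g2 p i0 j0 a).1.1 j0 := by
      rw [bi', bj']; exact hLRne
    have hval' := g2_val_merge cond' hne'
    rw [bi', bj'] at hval'
    have hLnE1 : (blockOf a.1.1 i0).filter (fun x => x ≤ i0) ∉
        a.1.1.erase (blockOf a.1.1 i0) :=
      fun hc => hLna (Finset.mem_of_mem_erase hc)
    have hRnE1 : (blockOf a.1.1 i0).filter (fun x => ¬ x ≤ i0) ∉
        a.1.1.erase (blockOf a.1.1 i0) :=
      fun hc => hRna (Finset.mem_of_mem_erase hc)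
    have hLnE2 : (blockOf a.1.1 i0).filter (fun x => x ≤ i0) ∉
        a.1.2.erase (blockOf a.1.1 i0) :=
      fun hc => hLna (a.2.2.2.1 (Finset.mem_of_mem_erase hc))
    have hRnE2 : (blockOf a.1.1 i0).filter (fun x => ¬ x ≤ i0) ∉
        a.1.2.erase (blockOf a.1.1 i0) :=
      fun hc => hRna (a.2.2.2.1 (Finset.mem_of_mem_erase hc))
    apply Subtype.ext
    rw [hval']
    apply Prod.ext
    · show insert _ (((g2 p i0 j0 a).1.1.erase _).erase _) = a.1.1
      rw [hfst, erase2_insert2 hLRne hLnE1 hRnE1, Finset.filter_union_filter_not_eq,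
        Finset.insert_erase hBm]
    · show insert _ (((g2 p i0 j0 a).1.2.erase _).erase _) = a.1.2
      rw [hsnd, erase2_insert2 hLRne hLnE2 hRnE2, Finset.filter_union_filter_not_eq,
        Finset.insert_erase hB2]
  · -- merge, then split back
    have hval := g2_val_merge ⟨hsp, hle, hij, hC0⟩ heq
    obtain ⟨h1, h2, key1, key2⟩ := merge_facts hsp hle hij hC0 heq
    have hMna : blockOf a.1.1 i0 ∪ blockOf a.1.1 j0 ∉ a.1.1 := merge_not_mem heq
    have hfst : (g2 p i0 j0 a).1.1 = insert (blockOf a.1.1 i0 ∪ blockOf a.1.1 j0)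
        ((a.1.1.erase (blockOf a.1.1 i0)).erase (blockOf a.1.1 j0)) := by rw [hval]
    have hsnd : (g2 p i0 j0 a).1.2 = insert (blockOf a.1.1 i0 ∪ blockOf a.1.1 j0)
        ((a.1.2.erase (blockOf a.1.1 i0)).erase (blockOf a.1.1 j0)) := by rw [hval]
    have bi' : blockOf (g2 p i0 j0 a).1.1 i0 =
        blockOf a.1.1 i0 ∪ blockOf a.1.1 j0 :=
      blockOf_eq (g2 p i0 j0 a).2.1 (by rw [hfst]; exact Finset.mem_insert_self _ _)
        (Finset.mem_union_left _ hi0B)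
    have bj' : blockOf (g2 p i0 j0 a).1.1 j0 =
        blockOf a.1.1 i0 ∪ blockOf a.1.1 j0 :=
      blockOf_eq (g2 p i0 j0 a).2.1 (by rw [hfst]; exact Finset.mem_insert_self _ _)
        (Finset.mem_union_right _ hj0B2)
    have heq' : blockOf (g2 p i0 j0 a).1.1 i0 = blockOf (g2 p i0 j0 a).1.1 j0 :=
      bi'.trans bj'.symm
    have hval' := g2_val_split cond' heq'
    rw [bi'] at hval'
    have hfil1 : (blockOf a.1.1 i0 ∪ blockOf a.1.1 j0).filter (fun x => x ≤ i0) =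
        blockOf a.1.1 i0 := by
      ext x
      simp only [Finset.mem_filter, Finset.mem_union]
      constructor
      · rintro ⟨(hx | hx), hle2⟩
        · exact hx
        · exfalso
          have := key2 x hx
          rw [Fin.le_def] at this hle2; omega
      · intro hx
        exact ⟨Or.inl hx, key1 x hx⟩
    have hfil2 : (blockOf a.1.1 i0 ∪ blockOf a.1.1 j0).filter (fun x => ¬ x ≤ i0) =
        blockOf a.1.1 j0 := by
      ext x
      simp only [Finset.mem_filter, Finset.mem_union]
      constructor
      · rintro ⟨(hx | hx), hle2⟩
        · exact absurd (key1 x hx) hle2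
        · exact hx
      · intro hx
        refine ⟨Or.inr hx, fun hc => ?_⟩
        have := key2 x hx
        rw [Fin.le_def] at this hc; omega
    have hMnE1 : blockOf a.1.1 i0 ∪ blockOf a.1.1 j0 ∉
        (a.1.1.erase (blockOf a.1.1 i0)).erase (blockOf a.1.1 j0) :=
      fun hc => hMna (Finset.mem_of_mem_erase (Finset.mem_of_mem_erase hc))
    have hMnE2 : blockOf a.1.1 i0 ∪ blockOf a.1.1 j0 ∉
        (a.1.2.erase (blockOf a.1.1 i0)).erase (blockOf a.1.1 j0) :=
      fun hc => hMna (a.2.2.2.1 (Finset.mem_of_mem_erase (Finset.mem_of_mem_erase hc)))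
    apply Subtype.ext
    rw [hval']
    apply Prod.ext
    · show insert _ (insert _ ((g2 p i0 j0 a).1.1.erase _)) = a.1.1
      rw [hfst, Finset.erase_insert hMnE1, hfil1, hfil2,
        Finset.insert_erase (Finset.mem_erase.2 ⟨fun hc => heq hc.symm, hB2m⟩),
        Finset.insert_erase hBm]
    · show insert _ (insert _ ((g2 p i0 j0 a).1.2.erase _)) = a.1.2
      rw [hsnd, Finset.erase_insert hMnE2, hfil1, hfil2,
        Finset.insert_erase (Finset.mem_erase.2 ⟨fun hc => heq hc.symm, h2⟩),
        Finset.insert_erase h1]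

set_option maxHeartbeats 1000000 in
lemma inv2_sum {n : ℕ} (p : INC n) {i0 j0 : Fin n} (hij : (i0 : ℕ) + 1 = (j0 : ℕ))
    (hC0 : ∃ C0 ∈ p.1.1, i0 ∈ C0 ∧ j0 ∈ C0) :
    ∑ τ ∈ Finset.univ.filter (fun τ : INC n => IPle τ.1 p.1), fv τ = 0 := by
  refine Finset.sum_involution (fun a _ => g2 p i0 j0 a) ?_ ?_ ?_ ?_
  · intro a ha
    show fv a + fv (g2 p i0 j0 a) = 0
    by_cases hsp : spl a
    · have hle : IPle a.1 p.1 := (Finset.mem_filter.1 ha).2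
      have cond : spl a ∧ IPle a.1 p.1 ∧ (i0 : ℕ) + 1 = (j0 : ℕ) ∧
          ∃ C0 ∈ p.1.1, i0 ∈ C0 ∧ j0 ∈ C0 := ⟨hsp, hle, hij, hC0⟩
      have hspg := g2_spl cond
      rw [fv, fv, if_pos hsp, if_pos hspg]
      by_cases heq : blockOf a.1.1 i0 = blockOf a.1.1 j0
      · have hcard := g2_card_split cond heq
        have hbound : (g2 p i0 j0 a).1.2.card ≤ n :=
          le_trans (Finset.card_le_card (g2 p i0 j0 a).2.2.2.1)
            (part_card_le (g2 p i0 j0 a).2.1)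
        rw [hcard]
        rw [hcard] at hbound
        exact sign_flip hbound
      · have hcard := g2_card_merge cond heq
        have hbound : a.1.2.card ≤ n :=
          le_trans (Finset.card_le_card a.2.2.2.1) (part_card_le a.2.1)
        have := sign_flip (m := n) (k := (g2 p i0 j0 a).1.2.card) (by omega)
        rw [hcard] at this
        linarith [this]
    · rw [g2_eq_self (fun hc => hsp hc.1), fv, if_neg hsp]
      ring
  · intro a ha hf
    show g2 p i0 j0 a ≠ a
    have hsp : spl a := by
      by_contra hc; rw [fv, if_neg hc] at hf; exact hf rfl
    have hle : IPle a.1 p.1 := (Finset.mem_filter.1 ha).2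
    have cond : spl a ∧ IPle a.1 p.1 ∧ (i0 : ℕ) + 1 = (j0 : ℕ) ∧
        ∃ C0 ∈ p.1.1, i0 ∈ C0 ∧ j0 ∈ C0 := ⟨hsp, hle, hij, hC0⟩
    intro hcontra
    have hcards : (g2 p i0 j0 a).1.2.card = a.1.2.card := by rw [hcontra]
    by_cases heq : blockOf a.1.1 i0 = blockOf a.1.1 j0
    · have := g2_card_split cond heq; omega
    · have := g2_card_merge cond heq; omega
  · intro a ha
    show g2 p i0 j0 a ∈ _
    by_cases hsp : spl a
    · have hle : IPle a.1 p.1 := (Finset.mem_filter.1 ha).2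
      exact Finset.mem_filter.2 ⟨Finset.mem_univ _, g2_mem ⟨hsp, hle, hij, hC0⟩⟩
    · rw [g2_eq_self (fun hc => hsp hc.1)]; exact ha
  · intro a ha
    show g2 p i0 j0 (g2 p i0 j0 a) = a
    by_cases hsp : spl a
    · have hle : IPle a.1 p.1 := (Finset.mem_filter.1 ha).2
      exact g2_invol ⟨hsp, hle, hij, hC0⟩
    · rw [g2_eq_self (fun hc => hsp hc.1), g2_eq_self (fun hc => hsp hc.1)]

lemma p_eq_z {n : ℕ} (p z : INC n)
    (hz1 : z.1.1 = Finset.univ.image fun i : Fin n => ({i} : Finset (Fin n)))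
    (hz2 : z.1.2 = Finset.univ.image fun i : Fin n => ({i} : Finset (Fin n)))
    (hD : ∀ i : Fin n, ({i} : Finset (Fin n)) ∈ p.1.1 → ({i} : Finset (Fin n)) ∈ p.1.2)
    (hF : ∀ i j : Fin n, (i : ℕ) + 1 = (j : ℕ) → ∀ B ∈ p.1.1, i ∈ B → j ∈ B → False) :
    p = z := by
  have claim : ∀ d : ℕ, ∀ B ∈ p.1.1, ∀ i ∈ B, ∀ j ∈ B, i < j → (j : ℕ) - (i : ℕ) = d →
      False := by
    intro d
    induction d using Nat.strong_induction_on with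
    | _ d IH =>
    intro B hB i hi j hj hij hd
    have hijn : (i : ℕ) < (j : ℕ) := hij
    have hd1 : 1 ≤ d := by omega
    by_cases hone : d = 1
    · exact hF i j (by omega) B hB hi hj
    · -- d ≥ 2 : consider x = i+1
      have hxlt : (i : ℕ) + 1 < n := by
        have := j.isLt; omega
      set x : Fin n := ⟨(i : ℕ) + 1, by omega⟩ with hxdef
      have hix : i < x := by rw [Fin.lt_def]; simp [hxdef]
      have hxj : x < j := by rw [Fin.lt_def]; simp [hxdef]; omega
      have hxB : x ∉ B := by
        intro hc
        exact IH 1 (by omega) B hB i hi x hc hix (by simp [hxdef])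
      obtain ⟨hVm, hxV⟩ := blockOf_mem p.2.1 x
      have hVB : blockOf p.1.1 x ≠ B := fun hc => hxB (hc ▸ hxV)
      have hVsub : ∀ y ∈ blockOf p.1.1 x, i < y ∧ y < j := by
        intro y hy
        have hyi : y ≠ i := fun h => hVB (part_unique p.2.1 hVm hB (h ▸ hy) hi)
        have hyj : y ≠ j := fun h => hVB (part_unique p.2.1 hVm hB (h ▸ hy) hj)
        by_contra hc
        rw [not_and_or] at hc
        rcases hc with hc | hc
        · -- y ≤ i, y ≠ i, so y < i : crossing y < i < x < j
          have hyi' : y < i := by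
            rw [Fin.lt_def]; rw [not_lt, Fin.le_def] at hc
            rcases lt_or_eq_of_le hc with h | h
            · exact h
            · exact absurd (Fin.ext h) hyi
          exact p.2.2.1 ⟨blockOf p.1.1 x, hVm, B, hB, hVB, y, hy, x, hxV, i, hi, j, hj,
            hyi', hix, hxj⟩
        · -- j ≤ y, y ≠ j, so j < y : crossing i < x < j < y
          have hyj' : j < y := by
            rw [Fin.lt_def]; rw [not_lt, Fin.le_def] at hc
            rcases lt_or_eq_of_le hc with h | h
            · exact h
            · exact absurd (Fin.ext h.symm) hyj
          exact p.2.2.1 ⟨B, hB, blockOf p.1.1 x, hVm, fun h => hVB h.symm, i, hi, j, hj,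
            x, hxV, y, hy, hix, hxj, hyj'⟩
      have hVnotopen : blockOf p.1.1 x ∉ p.1.2 := by
        intro hc
        exact (p.2.2.2.2 _ hc) ⟨B, hB, fun h => hVB h.symm, i, hi, j, hj, hVsub⟩
      by_cases hcV : (blockOf p.1.1 x).card = 1
      · obtain ⟨y, hy⟩ := Finset.card_eq_one.1 hcV
        have hxy : x = y := by
          have := hxV; rw [hy, Finset.mem_singleton] at this; exact this
        have : ({y} : Finset (Fin n)) ∈ p.1.1 := hy ▸ hVm
        exact hVnotopen (hy ▸ hD y this)
      · have h1lt : 1 < (blockOf p.1.1 x).card := by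
          have := Finset.card_pos.2 ⟨x, hxV⟩; omega
        obtain ⟨a, ha, b, hb, hab⟩ := Finset.one_lt_card.1 h1lt
        rcases lt_or_gt_of_ne hab with h | h
        · have hba := hVsub a ha
          have hbb := hVsub b hb
          simp only [Fin.lt_def] at hba hbb h
          refine IH ((b : ℕ) - (a : ℕ)) (by omega) _ hVm a ha b hb (by rw [Fin.lt_def]; omega)
            rfl
        · have hba := hVsub a ha
          have hbb := hVsub b hb
          simp only [gt_iff_lt, Fin.lt_def] at hba hbb h
          refine IH ((a : ℕ) - (b : ℕ)) (by omega) _ hVm b hb a ha (by rw [Fin.lt_def]; omega)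
            rfl
  have hsing : ∀ B ∈ p.1.1, ∃ i : Fin n, B = {i} := by
    intro B hB
    obtain ⟨x, hx⟩ := p.2.1.1 B hB
    refine ⟨x, ?_⟩
    ext y
    simp only [Finset.mem_singleton]
    constructor
    · intro hy
      by_contra hne
      rcases lt_or_gt_of_ne hne with h | h
      · exact absurd (claim ((x : ℕ) - (y : ℕ)) B hB y hy x hx h rfl) not_false
      · exact absurd (claim ((y : ℕ) - (x : ℕ)) B hB x hx y hy h rfl) not_false
    · rintro rfl; exact hx
  have h11 : p.1.1 = Finset.univ.image fun i : Fin n => ({i} : Finset (Fin n)) := by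
    apply subset_antisymm
    · intro B hB
      obtain ⟨i, rfl⟩ := hsing B hB
      exact Finset.mem_image.2 ⟨i, Finset.mem_univ _, rfl⟩
    · intro B hB
      obtain ⟨i, _, rfl⟩ := Finset.mem_image.1 hB
      obtain ⟨hVm, hiV⟩ := blockOf_mem p.2.1 i
      obtain ⟨y, hy⟩ := hsing _ hVm
      have : i = y := by rw [hy, Finset.mem_singleton] at hiV; exact hiV
      rw [this, ← hy]
      exact hVm
  have h12 : p.1.2 = p.1.1 := by
    apply subset_antisymm p.2.2.2.1
    intro B hB
    obtain ⟨i, rfl⟩ := hsing B hB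
    exact hD i hB
  exact Subtype.ext (Prod.ext (h11.trans hz1.symm) ((h12.trans h11).trans hz2.symm))

set_option maxHeartbeats 4000000 in
theorem stmt5 (n : ℕ) (μ : INC n → INC n → ℤ)
    (hmu1 : ∀ x, μ x x = 1)
    (hmu2 : ∀ x y : INC n, IPle x.1 y.1 → x ≠ y →
      ∑ τ ∈ Finset.univ.filter (fun τ : INC n => IPle x.1 τ.1 ∧ IPle τ.1 y.1),
        μ x τ = 0)
    (z : INC n)
    (hz1 : z.1.1 = Finset.univ.image fun i : Fin n => ({i} : Finset (Fin n)))
    (hz2 : z.1.2 = Finset.univ.image fun i : Fin n => ({i} : Finset (Fin n)))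
    (p : INC n) :
    μ z p = if IsIntervalPartition p.1.1 ∧ ∀ U ∈ p.1.1, U ∉ p.1.2 → U.card = 1
      then (-1) ^ (n - p.1.2.card)
      else 0 := by
  have main : ∀ N : ℕ, ∀ q : INC n,
      (Finset.univ.filter (fun τ : INC n => IPle τ.1 q.1)).card ≤ N → μ z q = fv q := by
    intro N
    induction N with
    | zero =>
      intro q hq
      exfalso
      have : 0 < (Finset.univ.filter (fun τ : INC n => IPle τ.1 q.1)).card :=
        Finset.card_pos.2 ⟨q, Finset.mem_filter.2 ⟨Finset.mem_univ _, IPle_refl q⟩⟩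
      omega
    | succ N IH =>
      intro q hq
      by_cases hqz : q = z
      · subst hqz
        rw [hmu1]
        have hspq : spl q := by
          constructor
          · intro B hB i hi j hj k hik hkj
            rw [hz1] at hB
            obtain ⟨m, _, rfl⟩ := Finset.mem_image.1 hB
            rw [Finset.mem_singleton] at hi hj ⊢
            subst hi; subst hj
            exact le_antisymm hkj hik
          · intro U hU hU2
            rw [hz1] at hU; rw [hz2] at hU2
            exact absurd hU hU2
        have hcard : q.1.2.card = n := by
          rw [hz2, Finset.card_image_of_injective _ Finset.singleton_injective,
            Finset.card_univ, Fintype.card_fin]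
        rw [fv, if_pos hspq, hcard]
        simp
      · have hzq : IPle z.1 q.1 := z_le z hz1 hz2 q
        have hzqne : z ≠ q := fun h => hqz h.symm
        have hsum := hmu2 z q hzq hzqne
        have hfeq : Finset.univ.filter (fun τ : INC n => IPle z.1 τ.1 ∧ IPle τ.1 q.1) =
            Finset.univ.filter (fun τ : INC n => IPle τ.1 q.1) := by
          apply Finset.filter_congr
          intro τ _
          exact ⟨fun h => h.2, fun h => ⟨z_le z hz1 hz2 τ, h⟩⟩
        rw [hfeq] at hsum
        set s := Finset.univ.filter (fun τ : INC n => IPle τ.1 q.1) with hsdef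
        have hqs : q ∈ s := Finset.mem_filter.2 ⟨Finset.mem_univ _, IPle_refl q⟩
        have hIH : ∀ τ ∈ s.erase q, μ z τ = fv τ := by
          intro τ hτ
          have hτq : τ ≠ q := Finset.ne_of_mem_erase hτ
          have hτle : IPle τ.1 q.1 :=
            (Finset.mem_filter.1 (Finset.mem_of_mem_erase hτ)).2
          apply IH
          have hsub : Finset.univ.filter (fun σ : INC n => IPle σ.1 τ.1) ⊆ s.erase q := by
            rw [Finset.subset_erase]
            constructor
            · intro σ hσ
              exact Finset.mem_filter.2 ⟨Finset.mem_univ _,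
                IPle_trans (Finset.mem_filter.1 hσ).2 hτle⟩
            · intro hc
              exact hτq (IPle_antisymm hτle (Finset.mem_filter.1 hc).2)
          have h1 := Finset.card_le_card hsub
          have h2 : (s.erase q).card = s.card - 1 := Finset.card_erase_of_mem hqs
          have h3 : 1 ≤ s.card := Finset.card_pos.2 ⟨q, hqs⟩
          omega
        have hfv : ∑ τ ∈ s, fv τ = 0 := by
          by_cases hD : ∃ i : Fin n, ({i} : Finset (Fin n)) ∈ q.1.1 ∧
              ({i} : Finset (Fin n)) ∉ q.1.2
          · obtain ⟨i, h1, h2⟩ := hD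
            exact inv1_sum q h1 h2
          · push_neg at hD
            by_cases hF : ∃ i j : Fin n, (i : ℕ) + 1 = (j : ℕ) ∧
                ∃ B ∈ q.1.1, i ∈ B ∧ j ∈ B
            · obtain ⟨i, j, hij, B, hB, hi, hj⟩ := hF
              exact inv2_sum q hij ⟨B, hB, hi, hj⟩
            · exfalso
              push_neg at hF
              refine hqz (p_eq_z q z hz1 hz2 hD ?_)
              intro i j hij B hB hi hj
              exact hF i j hij B hB hi hj
        have e1 : μ z q + ∑ τ ∈ s.erase q, μ z τ = ∑ τ ∈ s, μ z τ :=
          Finset.add_sum_erase s _ hqs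
        have e2 : fv q + ∑ τ ∈ s.erase q, fv τ = ∑ τ ∈ s, fv τ :=
          Finset.add_sum_erase s _ hqs
        have e3 : ∑ τ ∈ s.erase q, μ z τ = ∑ τ ∈ s.erase q, fv τ :=
          Finset.sum_congr rfl hIH
        rw [e3] at e1
        rw [hsum] at e1
        rw [hfv] at e2
        linarith
  have := main (Finset.univ.filter (fun τ : INC n => IPle τ.1 p.1)).card p le_rfl
  rw [this, fv]
  by_cases h : IsIntervalPartition p.1.1 ∧ ∀ U ∈ p.1.1, U ∉ p.1.2 → U.card = 1
  · rw [if_pos h]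
    exact if_pos (show spl p from h)
  · rw [if_neg h]
    exact if_neg (show ¬ spl p from h)
end

section
/- Let M be an associative ℂ-algebra, E : M → ℂ a linear functional, and let W_n : M^n → Γ(M) be the multilinear maps determined by W() = 1 and the recursion W(a₁,…,a_{n+1}) = W(a₁,…,a_n)·X(a_{n+1}) − Σ_{i=1}^n E(a_i a_{n+1})·W(a₁,…,â_i,…,a_n), where â_i means a_i is omitted. Then for all a₁,…,a_n ∈ M: X(a₁)X(a₂)⋯X(a_n) = Σ_{π ∈ P_{1,2}(n)} (Π_{{i<j} ∈ Pair(π)} E(a_i a_j)) · W(a_{v₁},…,a_{v_m}), where {v₁},…,{v_m} are the singleton blocks of π with v₁ < … < v_m. -/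
open Finset
open scoped Classical

noncomputable section

/-- For `U = {i₁ < … < iₘ}`, the ordered product `a_{i₁} ⋯ a_{iₘ}`. -/
def aProd {M : Type*} [Ring M] {n : ℕ} (a : Fin n → M) (B : Finset (Fin n)) : M :=
  ((B.sort (· ≤ ·)).map a).prod

/-- The elements of `Fin n` forming singleton blocks of `P`, in increasing order. -/
def singL {n : ℕ} (P : Finset (Finset (Fin n))) : List (Fin n) :=
  (Finset.univ.filter fun i : Fin n => ({i} : Finset (Fin n)) ∈ P).sort (· ≤ ·)

/-!
Induction on `n`. Multiplying the expansion of `X(a₁) ⋯ X(aₙ)` on the right by `X(aₙ₊₁)` and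
using the recursion in the form `W(b) X(c) = W(b, c) + ∑ᵢ E(bᵢ c) W(b₁, …, b̂ᵢ, …)` on every term,
the term of `π ∈ P_{1,2}(n)` splits into the term of `π ∪ {{n+1}}` and, for each singleton `{i}`
of `π`, the term of the partition obtained from `π` by replacing `{i}` with `{i, n+1}`. Every
partition in `P_{1,2}(n+1)` arises exactly once in this way: deleting `n+1` from its block gives
back `π` together with the partner of `n+1`, if any.
-/

theorem List.ofFn_removeNth {α : Type*} {m : ℕ} (b : Fin (m + 1) → α) (i : Fin (m + 1)) :
    List.ofFn (i.removeNth b) = (List.ofFn b).eraseIdx i := by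
  refine List.ext_getElem (by simp [List.length_eraseIdx]; omega) fun k h₁ h₂ => ?_
  simp only [List.getElem_ofFn, List.getElem_eraseIdx, Fin.removeNth, Fin.succAbove]
  split_ifs <;> simp_all [Fin.lt_def]

section WickWords

variable {M : Type*} [Ring M] [Algebra ℂ M]

variable (W : (m : ℕ) → (Fin m → M) → TensorAlgebra ℂ M)

def wickList (L : List M) : TensorAlgebra ℂ M :=
  W L.length L.get

lemma wickList_ofFn {m : ℕ} (b : Fin m → M) : wickList W (List.ofFn b) = W m b := by
  have hcast : ∀ (L : List M) (h : L.length = m), (∀ k, L.get (k.cast h.symm) = b k) →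
      wickList W L = W m b := by
    rintro L rfl hL
    exact congrArg (W _) (funext hL)
  exact hcast _ List.length_ofFn fun k => by simp

lemma apply_get_eq_wickList_map {ι : Type*} (l : List ι) (f : ι → M) :
    W l.length (fun k => f (l.get k)) = wickList W (l.map f) := by
  rw [← List.ofFn_getElem_eq_map, wickList_ofFn]
  rfl

variable (E : M →ₗ[ℂ] ℂ)

def WickRecursion : Prop :=
  (∀ a : Fin 1 → M, W 1 a = W 0 (Fin.init a) * TensorAlgebra.ι ℂ (a 0)) ∧
    ∀ (m : ℕ) (a : Fin (m + 2) → M),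
      W (m + 2) a =
        W (m + 1) (Fin.init a) * TensorAlgebra.ι ℂ (a (Fin.last (m + 1)))
          - ∑ i : Fin (m + 1),
              E (a i.castSucc * a (Fin.last (m + 1))) • W m (i.removeNth (Fin.init a))

variable {W E}

lemma wickList_ofFn_mul_ι (hW : WickRecursion W E) {m : ℕ} (b : Fin m → M) (c : M) :
    wickList W (List.ofFn b) * TensorAlgebra.ι ℂ c
      = wickList W (List.ofFn b ++ [c])
        + ∑ i : Fin m, E (b i * c) • wickList W ((List.ofFn b).eraseIdx i) := by
  have hsnoc : List.ofFn b ++ [c] = List.ofFn (Fin.snoc b c : Fin (m + 1) → M) := by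
    rw [List.ofFn_succ', List.concat_eq_append]
    simp
  rw [hsnoc, wickList_ofFn, wickList_ofFn]
  cases m with
  | zero =>
    have h := hW.1 (Fin.snoc b c)
    rw [show (0 : Fin 1) = Fin.last 0 from rfl, Fin.snoc_last, Fin.init_snoc] at h
    simp [h]
  | succ m =>
    have h := hW.2 m (Fin.snoc b c)
    simp only [Fin.init_snoc, Fin.snoc_last, Fin.snoc_castSucc, eq_sub_iff_add_eq] at h
    simp only [← List.ofFn_removeNth, wickList_ofFn]
    exact h.symm

lemma wickList_map_mul_ι (hW : WickRecursion W E) {ι : Type*} [DecidableEq ι] {l : List ι}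
    (hl : l.Nodup) (f : ι → M) (c : M) :
    wickList W (l.map f) * TensorAlgebra.ι ℂ c
      = wickList W (l.map f ++ [c])
        + ∑ i ∈ l.toFinset, E (f i * c) • wickList W ((l.erase i).map f) := by
  rw [List.sum_toFinset _ hl, ← Fin.sum_univ_fun_getElem, ← List.ofFn_getElem_eq_map,
    wickList_ofFn_mul_ι hW, List.ofFn_getElem_eq_map]
  congr 1
  refine Finset.sum_congr rfl fun k _ => ?_
  rw [List.eraseIdx_map, hl.erase_getElem]

end WickWords

section Partitions

variable {n : ℕ}

def partitions12 (n : ℕ) : Finset (Finset (Finset (Fin n))) :=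
  univ.filter fun π => IsPartition π ∧ ∀ B ∈ π, #B = 1 ∨ #B = 2

def singletons (π : Finset (Finset (Fin n))) : Finset (Fin n) :=
  univ.filter fun i => {i} ∈ π

def liftPartition (π : Finset (Finset (Fin n))) : Finset (Finset (Fin (n + 1))) :=
  π.map (mapEmbedding Fin.castSuccEmb).toEmbedding

def restrictBlock (B : Finset (Fin (n + 1))) : Finset (Fin n) :=
  B.preimage Fin.castSucc (Fin.castSucc_injective n).injOn

def lastBlock (s : Finset (Fin n)) : Finset (Fin (n + 1)) :=
  insert (Fin.last n) (s.map Fin.castSuccEmb)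

def insertLastBlock (ρ : Finset (Finset (Fin n))) (s : Finset (Fin n)) :
    Finset (Finset (Fin (n + 1))) :=
  insert (lastBlock s) (liftPartition ρ)

lemma last_mem_lastBlock (s : Finset (Fin n)) : Fin.last n ∈ lastBlock s :=
  mem_insert_self _ _

lemma card_lastBlock (s : Finset (Fin n)) : #(lastBlock s) = #s + 1 := by
  simp [lastBlock, card_insert_of_notMem, Fin.castSucc_ne_last]

lemma mem_liftPartition {ρ : Finset (Finset (Fin n))} {B' : Finset (Fin (n + 1))} :
    B' ∈ liftPartition ρ ↔ ∃ B ∈ ρ, B.map Fin.castSuccEmb = B' := by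
  simp [liftPartition]

lemma last_notMem_of_mem_liftPartition {ρ : Finset (Finset (Fin n))} {B' : Finset (Fin (n + 1))}
    (h : B' ∈ liftPartition ρ) : Fin.last n ∉ B' := by
  obtain ⟨B, -, rfl⟩ := mem_liftPartition.1 h
  simp [Fin.castSucc_ne_last]

lemma lastBlock_notMem_liftPartition (ρ : Finset (Finset (Fin n))) (s : Finset (Fin n)) :
    lastBlock s ∉ liftPartition ρ :=
  fun h => last_notMem_of_mem_liftPartition h (last_mem_lastBlock s)

lemma restrictBlock_map (B : Finset (Fin n)) : restrictBlock (B.map Fin.castSuccEmb) = B := by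
  ext i; simp [restrictBlock]

lemma map_restrictBlock (B : Finset (Fin (n + 1))) :
    (restrictBlock B).map Fin.castSuccEmb = B.erase (Fin.last n) := by
  ext j
  induction j using Fin.lastCases <;> simp [restrictBlock, Fin.castSucc_ne_last]

lemma restrictBlock_lastBlock (s : Finset (Fin n)) : restrictBlock (lastBlock s) = s := by
  ext i; simp [restrictBlock, lastBlock, Fin.castSucc_ne_last]

lemma image_restrictBlock_liftPartition (ρ : Finset (Finset (Fin n))) :
    (liftPartition ρ).image restrictBlock = ρ := by
  rw [liftPartition, map_eq_image, image_image]
  conv_rhs => rw [← image_id (s := ρ)]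
  exact image_congr fun B _ => restrictBlock_map B

lemma liftPartition_image_restrictBlock {X : Finset (Finset (Fin (n + 1)))}
    (h : ∀ B ∈ X, Fin.last n ∉ B) : liftPartition (X.image restrictBlock) = X := by
  rw [liftPartition, map_eq_image, image_image]
  conv_rhs => rw [← image_id (s := X)]
  refine image_congr fun B hB => ?_
  simp [map_restrictBlock, erase_eq_of_notMem (h B hB)]

def restrictPartition (π' : Finset (Finset (Fin (n + 1)))) : Finset (Finset (Fin n)) :=
  (π'.filter (Fin.last n ∉ ·)).image restrictBlock

def lastPartner (π' : Finset (Finset (Fin (n + 1)))) : Finset (Fin n) :=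
  restrictBlock ((π'.filter (Fin.last n ∈ ·)).sup id)

lemma filter_last_mem_insertLastBlock (ρ : Finset (Finset (Fin n))) (s : Finset (Fin n)) :
    (insertLastBlock ρ s).filter (Fin.last n ∈ ·) = {lastBlock s} := by
  rw [insertLastBlock, filter_insert, if_pos (last_mem_lastBlock s),
    filter_false_of_mem fun B hB => last_notMem_of_mem_liftPartition hB]
  rfl

lemma restrictPartition_insertLastBlock (ρ : Finset (Finset (Fin n))) (s : Finset (Fin n)) :
    restrictPartition (insertLastBlock ρ s) = ρ := by
  rw [restrictPartition, insertLastBlock, filter_insert, if_neg (not_not.2 (last_mem_lastBlock s)),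
    filter_true_of_mem fun B hB => last_notMem_of_mem_liftPartition hB,
    image_restrictBlock_liftPartition]

lemma lastPartner_insertLastBlock (ρ : Finset (Finset (Fin n))) (s : Finset (Fin n)) :
    lastPartner (insertLastBlock ρ s) = s := by
  rw [lastPartner, filter_last_mem_insertLastBlock, sup_singleton, id, restrictBlock_lastBlock]

lemma insertLastBlock_restrictPartition_lastPartner {π' : Finset (Finset (Fin (n + 1)))}
    (h : IsPartition π') : insertLastBlock (restrictPartition π') (lastPartner π') = π' := by
  obtain ⟨B₀, hB₀⟩ : ∃ B₀, π'.filter (Fin.last n ∈ ·) = {B₀} :=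
    card_eq_one.1 (card_eq_one_iff_existsUnique.2 (by simpa using h.2 (Fin.last n)))
  have hB₀mem : B₀ ∈ π'.filter (Fin.last n ∈ ·) := hB₀ ▸ mem_singleton_self B₀
  have hlast : Fin.last n ∈ B₀ := (mem_filter.1 hB₀mem).2
  have hblock : lastBlock (lastPartner π') = B₀ := by
    rw [lastPartner, hB₀, sup_singleton, id, lastBlock, map_restrictBlock, insert_erase hlast]
  rw [insertLastBlock, hblock, restrictPartition,
    liftPartition_image_restrictBlock fun B hB => (mem_filter.1 hB).2, insert_eq, ← hB₀,
    filter_union_filter_not_eq]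

lemma isPartition_iff_card_filter {π : Finset (Finset (Fin n))} :
    IsPartition π ↔ ∅ ∉ π ∧ ∀ i, #(π.filter (i ∈ ·)) = 1 := by
  simp only [IsPartition, card_eq_one_iff_existsUnique, mem_filter, nonempty_iff_ne_empty]
  exact and_congr_left' ⟨fun h h₀ => h ∅ h₀ rfl, fun h B hB hB₀ => h (hB₀ ▸ hB)⟩

lemma card_filter_mem_insert {α : Type*} [DecidableEq α] {π : Finset (Finset α)}
    {s : Finset α} (hs : s ∉ π) (i : α) :
    #((insert s π).filter (i ∈ ·)) = #(π.filter (i ∈ ·)) + if i ∈ s then 1 else 0 := by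
  rw [filter_insert]
  split_ifs
  · exact card_insert_of_notMem fun h => hs (mem_filter.1 h).1
  · rfl

lemma isPartition_insertLastBlock_iff {ρ : Finset (Finset (Fin n))} {s : Finset (Fin n)} :
    IsPartition (insertLastBlock ρ s)
      ↔ ∅ ∉ ρ ∧ ∀ i, #(ρ.filter (i ∈ ·)) + (if i ∈ s then 1 else 0) = 1 := by
  have hcount : ∀ i : Fin n, #((insertLastBlock ρ s).filter (i.castSucc ∈ ·))
      = #(ρ.filter (i ∈ ·)) + if i ∈ s then 1 else 0 := by
    intro i
    rw [insertLastBlock, card_filter_mem_insert (lastBlock_notMem_liftPartition ρ s), liftPartition,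
      filter_map, card_map]
    simp [lastBlock, Fin.castSucc_ne_last, Function.comp_def]
  have hempty : ∅ ∈ insertLastBlock ρ s ↔ ∅ ∈ ρ := by
    simp [insertLastBlock, lastBlock, liftPartition, eq_comm (a := (∅ : Finset (Fin (n + 1))))]
  rw [isPartition_iff_card_filter, Fin.forall_fin_succ', hempty, filter_last_mem_insertLastBlock]
  simp [hcount]

lemma isPartition_insertLastBlock_empty {ρ : Finset (Finset (Fin n))} :
    IsPartition (insertLastBlock ρ ∅) ↔ IsPartition ρ := by
  rw [isPartition_insertLastBlock_iff, isPartition_iff_card_filter]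
  simp

lemma isPartition_insertLastBlock_iff_insert {ρ : Finset (Finset (Fin n))} {s : Finset (Fin n)}
    (hs : s.Nonempty) (hsρ : s ∉ ρ) :
    IsPartition (insertLastBlock ρ s) ↔ IsPartition (insert s ρ) := by
  rw [isPartition_insertLastBlock_iff, isPartition_iff_card_filter]
  simp [card_filter_mem_insert hsρ, hs.ne_empty.symm]

lemma notMem_of_isPartition_insertLastBlock {ρ : Finset (Finset (Fin n))} {s : Finset (Fin n)}
    (h : IsPartition (insertLastBlock ρ s)) (hs : s.Nonempty) : s ∉ ρ := by
  obtain ⟨i, hi⟩ := hs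
  intro hsρ
  have hcount := (isPartition_insertLastBlock_iff.1 h).2 i
  rw [if_pos hi, add_eq_right, card_eq_zero] at hcount
  exact notMem_empty s (hcount ▸ mem_filter.2 ⟨hsρ, hi⟩)

lemma forall_card_insertLastBlock {ρ : Finset (Finset (Fin n))} {s : Finset (Fin n)} :
    (∀ B ∈ insertLastBlock ρ s, #B = 1 ∨ #B = 2)
      ↔ (#s + 1 = 1 ∨ #s + 1 = 2) ∧ ∀ B ∈ ρ, #B = 1 ∨ #B = 2 := by
  simp [insertLastBlock, card_lastBlock, liftPartition]

lemma mem_partitions12 {π : Finset (Finset (Fin n))} :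
    π ∈ partitions12 n ↔ IsPartition π ∧ ∀ B ∈ π, #B = 1 ∨ #B = 2 := by
  simp [partitions12]

lemma insertLastBlock_empty_mem_partitions12 {ρ : Finset (Finset (Fin n))} :
    insertLastBlock ρ ∅ ∈ partitions12 (n + 1) ↔ ρ ∈ partitions12 n := by
  simp [mem_partitions12, isPartition_insertLastBlock_empty, forall_card_insertLastBlock]

lemma insertLastBlock_mem_partitions12 {ρ : Finset (Finset (Fin n))} {s : Finset (Fin n)}
    (hs : s.Nonempty) (hsρ : s ∉ ρ) :
    insertLastBlock ρ s ∈ partitions12 (n + 1) ↔ insert s ρ ∈ partitions12 n ∧ #s = 1 := by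
  have hcard : (#s + 1 = 1 ∨ #s + 1 = 2) ↔ (#s = 1 ∨ #s = 2) ∧ #s = 1 := by
    have := card_ne_zero.2 hs
    omega
  simp only [mem_partitions12, isPartition_insertLastBlock_iff_insert hs hsρ,
    forall_card_insertLastBlock, forall_mem_insert, hcard]
  tauto

lemma filter_card_eq_one_eq_map_singletons (π : Finset (Finset (Fin n))) :
    π.filter (#· = 1) = (singletons π).map ⟨({·}), singleton_injective⟩ := by
  ext B
  simp only [mem_filter, mem_map, singletons, mem_univ, true_and, Function.Embedding.coeFn_mk]
  constructor
  · rintro ⟨hB, hcard⟩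
    obtain ⟨i, rfl⟩ := card_eq_one.1 hcard
    exact ⟨i, hB, rfl⟩
  · rintro ⟨i, hi, rfl⟩
    exact ⟨hi, card_singleton i⟩

lemma partitions12_zero : partitions12 0 = {∅} := by
  ext π
  rw [mem_partitions12, isPartition_iff_card_filter, mem_singleton]
  constructor
  · rintro ⟨⟨h, -⟩, -⟩
    exact eq_empty_of_forall_notMem fun B hB => h (Subsingleton.elim B ∅ ▸ hB)
  · rintro rfl
    simp

lemma restrictPartition_mem_partitions12 {π' : Finset (Finset (Fin (n + 1)))}
    (hπ' : π' ∈ partitions12 (n + 1)) (hs : lastPartner π' = ∅) :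
    restrictPartition π' ∈ partitions12 n := by
  have h := insertLastBlock_restrictPartition_lastPartner (mem_partitions12.1 hπ').1
  rw [hs] at h
  rwa [← insertLastBlock_empty_mem_partitions12, h]

lemma lastPartner_notMem_restrictPartition {π' : Finset (Finset (Fin (n + 1)))}
    (hπ' : π' ∈ partitions12 (n + 1)) (hs : (lastPartner π').Nonempty) :
    lastPartner π' ∉ restrictPartition π' := by
  refine notMem_of_isPartition_insertLastBlock ?_ hs
  rw [insertLastBlock_restrictPartition_lastPartner (mem_partitions12.1 hπ').1]
  exact (mem_partitions12.1 hπ').1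

lemma insert_lastPartner_restrictPartition_mem_partitions12 {π' : Finset (Finset (Fin (n + 1)))}
    (hπ' : π' ∈ partitions12 (n + 1)) (hs : (lastPartner π').Nonempty) :
    insert (lastPartner π') (restrictPartition π') ∈ partitions12 n ∧ #(lastPartner π') = 1 := by
  rw [← insertLastBlock_mem_partitions12 hs (lastPartner_notMem_restrictPartition hπ' hs),
    insertLastBlock_restrictPartition_lastPartner (mem_partitions12.1 hπ').1]
  exact hπ'

variable {β : Type*} [AddCommMonoid β]

lemma sum_partitions12_lastPartner_eq_empty (f : Finset (Finset (Fin (n + 1))) → β) :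
    ∑ π' ∈ (partitions12 (n + 1)).filter (lastPartner · = ∅), f π'
      = ∑ π ∈ partitions12 n, f (insertLastBlock π ∅) := by
  refine (sum_nbij' (insertLastBlock · ∅) restrictPartition (fun π hπ => ?_) (fun π' hπ' => ?_)
    (fun π _ => restrictPartition_insertLastBlock π ∅) (fun π' hπ' => ?_) fun _ _ => rfl).symm
  · exact mem_filter.2 ⟨insertLastBlock_empty_mem_partitions12.2 hπ, lastPartner_insertLastBlock π ∅⟩
  · exact restrictPartition_mem_partitions12 (mem_filter.1 hπ').1 (mem_filter.1 hπ').2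
  · obtain ⟨hπ', hs⟩ := mem_filter.1 hπ'
    rw [← hs]
    exact insertLastBlock_restrictPartition_lastPartner (mem_partitions12.1 hπ').1

lemma sum_partitions12_lastPartner_ne_empty (f : Finset (Finset (Fin (n + 1))) → β) :
    ∑ π' ∈ (partitions12 (n + 1)).filter (lastPartner · ≠ ∅), f π'
      = ∑ π ∈ partitions12 n, ∑ i ∈ singletons π, f (insertLastBlock (π.erase {i}) {i}) := by
  have hinner : ∀ π : Finset (Finset (Fin n)),
      ∑ i ∈ singletons π, f (insertLastBlock (π.erase {i}) {i})
        = ∑ s ∈ π.filter (#· = 1), f (insertLastBlock (π.erase s) s) := fun π => by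
    rw [filter_card_eq_one_eq_map_singletons, sum_map]
    rfl
  rw [sum_congr rfl fun π _ => hinner π, ← sum_sigma _ (fun π => π.filter (#· = 1))
    fun x : (_ : Finset (Finset (Fin n))) × Finset (Fin n) =>
      f (insertLastBlock (x.1.erase x.2) x.2)]
  refine (sum_nbij' (fun x : (_ : Finset (Finset (Fin n))) × Finset (Fin n) =>
      insertLastBlock (x.1.erase x.2) x.2)
    (fun π' => ⟨insert (lastPartner π') (restrictPartition π'), lastPartner π'⟩)
    ?_ ?_ ?_ ?_ fun _ _ => rfl).symm
  · rintro ⟨π, s⟩ hx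
    obtain ⟨hπ, hs, hcard⟩ : π ∈ partitions12 n ∧ s ∈ π ∧ #s = 1 := by simpa using hx
    have hne : s.Nonempty := card_pos.1 (by omega)
    refine mem_filter.2 ⟨?_, by rw [lastPartner_insertLastBlock]; exact hne.ne_empty⟩
    rw [insertLastBlock_mem_partitions12 hne (notMem_erase _ _), insert_erase hs]
    exact ⟨hπ, hcard⟩
  · intro π' hπ'
    obtain ⟨hπ', hs⟩ := mem_filter.1 hπ'
    simpa using insert_lastPartner_restrictPartition_mem_partitions12 hπ'
      (nonempty_iff_ne_empty.2 hs)
  · rintro ⟨π, s⟩ hx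
    obtain ⟨-, hs, -⟩ : π ∈ partitions12 n ∧ s ∈ π ∧ #s = 1 := by simpa using hx
    simp [restrictPartition_insertLastBlock, lastPartner_insertLastBlock, insert_erase hs]
  · intro π' hπ'
    obtain ⟨hπ', hs⟩ := mem_filter.1 hπ'
    rw [erase_insert (lastPartner_notMem_restrictPartition hπ' (nonempty_iff_ne_empty.2 hs)),
      insertLastBlock_restrictPartition_lastPartner (mem_partitions12.1 hπ').1]

lemma sum_partitions12_succ (f : Finset (Finset (Fin (n + 1))) → β) :
    ∑ π' ∈ partitions12 (n + 1), f π'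
      = ∑ π ∈ partitions12 n,
          (f (insertLastBlock π ∅) + ∑ i ∈ singletons π, f (insertLastBlock (π.erase {i}) {i})) := by
  rw [sum_add_distrib, ← sum_partitions12_lastPartner_eq_empty,
    ← sum_partitions12_lastPartner_ne_empty, sum_filter_add_sum_filter_not]

end Partitions

section Singletons

variable {n : ℕ}

lemma mem_singL {π : Finset (Finset (Fin n))} {i : Fin n} : i ∈ singL π ↔ {i} ∈ π := by
  simp [singL]

lemma nodup_singL (π : Finset (Finset (Fin n))) : (singL π).Nodup :=
  sort_nodup _ _

lemma toFinset_singL (π : Finset (Finset (Fin n))) : (singL π).toFinset = singletons π :=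
  sort_toFinset _ _

lemma singL_eq_of_sortedLT {π : Finset (Finset (Fin n))} {l : List (Fin n)} (hl : l.SortedLT)
    (hmem : ∀ i, i ∈ l ↔ {i} ∈ π) : singL π = l :=
  (sortedLT_sort _).eq_of_mem_iff hl fun i => mem_singL.trans (hmem i).symm

lemma singleton_castSucc_mem_liftPartition {ρ : Finset (Finset (Fin n))} {i : Fin n} :
    {i.castSucc} ∈ liftPartition ρ ↔ {i} ∈ ρ := by
  rw [← Fin.coe_castSuccEmb, ← map_singleton, liftPartition]
  exact mem_map' (mapEmbedding Fin.castSuccEmb).toEmbedding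

lemma singL_insertLastBlock_empty (ρ : Finset (Finset (Fin n))) :
    singL (insertLastBlock ρ ∅) = (singL ρ).map Fin.castSucc ++ [Fin.last n] := by
  refine singL_eq_of_sortedLT ?_ fun j => ?_
  · rw [List.sortedLT_iff_pairwise, List.pairwise_append, List.pairwise_map]
    exact ⟨(sortedLT_sort _).pairwise.imp Fin.castSucc_lt_castSucc_iff.2, List.pairwise_singleton _ _,
      by simp [Fin.castSucc_lt_last]⟩
  · induction j using Fin.lastCases <;>
      simp [insertLastBlock, lastBlock, mem_singL, singleton_castSucc_mem_liftPartition,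
        Fin.castSucc_ne_last]

lemma singL_insertLastBlock_singleton (π : Finset (Finset (Fin n))) (i : Fin n) :
    singL (insertLastBlock (π.erase {i}) {i}) = ((singL π).erase i).map Fin.castSucc := by
  refine singL_eq_of_sortedLT ?_ fun j => ?_
  · rw [List.sortedLT_iff_pairwise, List.pairwise_map]
    exact ((sortedLT_sort _).pairwise.sublist List.erase_sublist).imp
      Fin.castSucc_lt_castSucc_iff.2
  · have hne (j : Fin (n + 1)) : {j} ≠ lastBlock {i} := fun h => by
      simpa [card_lastBlock] using congrArg card h
    induction j using Fin.lastCases with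
    | last =>
      simpa [insertLastBlock, hne, Fin.castSucc_ne_last] using
        fun h => last_notMem_of_mem_liftPartition h (mem_singleton_self _)
    | cast j =>
      simp [insertLastBlock, hne, (nodup_singL π).mem_erase_iff, mem_singL,
        singleton_castSucc_mem_liftPartition, and_comm]

end Singletons

section PairWeights

variable {M : Type*} [Ring M] {n : ℕ}

lemma aProd_map_castSucc (a : Fin (n + 1) → M) (B : Finset (Fin n)) :
    aProd a (B.map Fin.castSuccEmb) = aProd (fun i => a i.castSucc) B := by
  rw [aProd, aProd, ← (Fin.strictMono_castSucc.strictMonoOn _).map_finsetSort, List.map_map]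
  rfl

lemma aProd_pair (a : Fin n → M) {i j : Fin n} (h : i < j) : aProd a {i, j} = a i * a j := by
  rw [aProd, sort_insert _ (by simpa using h.le) (by simpa using h.ne)]
  simp

variable [Algebra ℂ M] (E : M →ₗ[ℂ] ℂ)

lemma prod_filter_card_liftPartition (a : Fin (n + 1) → M) (ρ : Finset (Finset (Fin n))) :
    ∏ B ∈ (liftPartition ρ).filter (#· = 2), E (aProd a B)
      = ∏ B ∈ ρ.filter (#· = 2), E (aProd (fun i => a i.castSucc) B) := by
  rw [liftPartition, filter_map, prod_map]
  simp [aProd_map_castSucc]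

lemma prod_pairs_insertLastBlock_empty (a : Fin (n + 1) → M) (ρ : Finset (Finset (Fin n))) :
    ∏ B ∈ (insertLastBlock ρ ∅).filter (#· = 2), E (aProd a B)
      = ∏ B ∈ ρ.filter (#· = 2), E (aProd (fun i => a i.castSucc) B) := by
  rw [insertLastBlock, filter_insert, if_neg (by simp [card_lastBlock]),
    prod_filter_card_liftPartition]

lemma prod_pairs_insertLastBlock_singleton (a : Fin (n + 1) → M) (π : Finset (Finset (Fin n)))
    (i : Fin n) :
    ∏ B ∈ (insertLastBlock (π.erase {i}) {i}).filter (#· = 2), E (aProd a B)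
      = E (a i.castSucc * a (Fin.last n))
        * ∏ B ∈ π.filter (#· = 2), E (aProd (fun j => a j.castSucc) B) := by
  have hpair : lastBlock {i} = {i.castSucc, Fin.last n} := by
    rw [lastBlock, map_singleton, pair_comm]
    rfl
  rw [insertLastBlock, filter_insert, if_pos (by simp [card_lastBlock]),
    prod_insert (fun h => lastBlock_notMem_liftPartition _ _ (mem_filter.1 h).1),
    prod_filter_card_liftPartition, filter_erase, erase_eq_of_notMem (by simp), hpair,
    aProd_pair a (Fin.castSucc_lt_last i)]

end PairWeights

section Expansion

variable {M : Type*} [Ring M] [Algebra ℂ M] (E : M →ₗ[ℂ] ℂ)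
  (W : (m : ℕ) → (Fin m → M) → TensorAlgebra ℂ M) {n : ℕ}

def wickTerm (a : Fin n → M) (π : Finset (Finset (Fin n))) : TensorAlgebra ℂ M :=
  (∏ B ∈ π.filter fun B => B.card = 2, E (aProd a B)) •
    W (singL π).length (fun j => a ((singL π).get j))

lemma wickTerm_mul_ι (hW : WickRecursion W E) (a : Fin (n + 1) → M) (π : Finset (Finset (Fin n))) :
    wickTerm E W (fun i => a i.castSucc) π * TensorAlgebra.ι ℂ (a (Fin.last n))
      = wickTerm E W a (insertLastBlock π ∅)
        + ∑ i ∈ singletons π, wickTerm E W a (insertLastBlock (π.erase {i}) {i}) := by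
  simp only [wickTerm, apply_get_eq_wickList_map]
  rw [apply_get_eq_wickList_map W (singL π) (fun i => a i.castSucc), smul_mul_assoc,
    wickList_map_mul_ι hW (nodup_singL π), toFinset_singL, smul_add,
    smul_sum, prod_pairs_insertLastBlock_empty, singL_insertLastBlock_empty, List.map_append,
    List.map_map]
  congr 1
  refine sum_congr rfl fun i _ => ?_
  rw [prod_pairs_insertLastBlock_singleton, singL_insertLastBlock_singleton, List.map_map,
    smul_smul, mul_comm]
  rfl

end Expansion

theorem stmt7 {M : Type*} [Ring M] [Algebra ℂ M] (E : M →ₗ[ℂ] ℂ)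
    (W : (m : ℕ) → (Fin m → M) → TensorAlgebra ℂ M)
    (hW0 : ∀ a : Fin 0 → M, W 0 a = 1)
    (hW1 : ∀ a : Fin 1 → M, W 1 a = W 0 (Fin.init a) * TensorAlgebra.ι ℂ (a 0))
    (hWrec : ∀ (m : ℕ) (a : Fin (m + 2) → M),
      W (m + 2) a =
        W (m + 1) (Fin.init a) * TensorAlgebra.ι ℂ (a (Fin.last (m + 1)))
          - ∑ i : Fin (m + 1),
              E (a i.castSucc * a (Fin.last (m + 1))) • W m (i.removeNth (Fin.init a)))
    (n : ℕ) (a : Fin n → M) :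
    (List.ofFn fun i => TensorAlgebra.ι ℂ (a i)).prod
      = ∑ π ∈ Finset.univ.filter (fun π : Finset (Finset (Fin n)) =>
            IsPartition π ∧ ∀ B ∈ π, B.card = 1 ∨ B.card = 2),
          (∏ B ∈ π.filter fun B => B.card = 2, E (aProd a B)) •
            W (singL π).length (fun j => a ((singL π).get j)) := by
  change _ = ∑ π ∈ partitions12 n, wickTerm E W a π
  induction n with
  | zero =>
    rw [partitions12_zero, sum_singleton, wickTerm, apply_get_eq_wickList_map W,
      show singL (∅ : Finset (Finset (Fin 0))) = [] by simp [singL]]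
    simp only [List.ofFn_zero, List.prod_nil, filter_empty, prod_empty, one_smul, wickList]
    exact (hW0 _).symm
  | succ n ih =>
    rw [List.ofFn_succ', List.prod_concat, ih, sum_mul, sum_partitions12_succ]
    exact sum_congr rfl fun π _ => wickTerm_mul_ι E W ⟨hW1, hWrec⟩ a π
end
end

section
/- Let M be an associative ℂ-algebra, E : M → ℂ a linear functional, and let W_n : M^n → Γ(M) be the multilinear maps determined by W() = 1 and the recursion W(a₁,…,a_{n+1}) = W(a₁,…,a_n)·X(a_{n+1}) − Σ_{i=1}^n E(a_i a_{n+1})·W(a₁,…,â_i,…,a_n). Then for all a₁,…,a_n ∈ M: W(a₁,…,a_n) = Σ_{π ∈ P_{1,2}(n)} (−1)^{|Pair(π)|} (Π_{{i<j} ∈ Pair(π)} E(a_i a_j)) · X(a_{v₁})X(a_{v₂})⋯X(a_{v_m}), where {v₁},…,{v_m} are the singleton blocks of π with v₁ < … < v_m. -/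
open Finset
open scoped Classical

noncomputable section

/-!
Write `R(a)` for the right-hand side. Classify the partitions in `P_{1,2}(n + 2)` by the block
containing the last point. If it is a singleton, deleting it leaves a partition of the first
`n + 1` points with the same pairs, and the word loses its final letter `X(a_{n+2})`. If it is
`{i, n + 2}`, deleting it and relabelling the remaining `n` points in increasing order leaves a
partition with the same singletons, and the coefficient loses the factor `-E(a_i a_{n+2})`.
So `R` obeys the recursion defining `W`, and `W = R` by induction.
-/

theorem IsPartition.eq_of_mem {n : ℕ} {π : Finset (Finset (Fin n))} (h : IsPartition π)
    {B B' : Finset (Fin n)} (hB : B ∈ π) (hB' : B' ∈ π) {i : Fin n} (hi : i ∈ B)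
    (hi' : i ∈ B') : B = B' :=
  (h.2 i).unique ⟨hB, hi⟩ ⟨hB', hi'⟩

namespace WickFormula

section Sorting

variable {α : Type*} [LinearOrder α]

theorem sort_insert_of_forall_lt {s : Finset α} {c : α} (h : ∀ b ∈ s, b < c) :
    (insert c s).sort (· ≤ ·) = s.sort (· ≤ ·) ++ [c] := by
  refine (sortedLT_sort _).eq_of_mem_iff ?_ fun x => by simp [or_comm]
  rw [List.sortedLT_iff_pairwise, List.pairwise_append]
  exact ⟨(sortedLT_sort s).pairwise, List.pairwise_singleton _ _, by simpa using h⟩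

theorem sort_pair {x y : α} (h : x < y) : ({x, y} : Finset α).sort (· ≤ ·) = [x, y] := by
  rw [pair_comm, sort_insert_of_forall_lt (by simpa using h), sort_singleton]
  rfl

end Sorting

def P12 (n : ℕ) : Finset (Finset (Finset (Fin n))) :=
  univ.filter fun π => IsPartition π ∧ ∀ B ∈ π, B.card = 1 ∨ B.card = 2

theorem P12_zero : P12 0 = {∅} := by
  refine eq_singleton_iff_unique_mem.2 ⟨by simp [P12, IsPartition], fun π hπ => ?_⟩
  refine eq_empty_of_forall_notMem fun B hB => ?_
  obtain ⟨i, -⟩ := (mem_filter.1 hπ).2.1.1 B hB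
  exact i.elim0

theorem isPartition_of_mem_P12 {n : ℕ} {π : Finset (Finset (Fin n))} (h : π ∈ P12 n) :
    IsPartition π :=
  (mem_filter.1 h).2.1

section Transfer

variable {k N : ℕ}

def pushPartition (C : Finset (Fin N)) (f : Fin k ↪ Fin N) (σ : Finset (Finset (Fin k))) :
    Finset (Finset (Fin N)) :=
  insert C (σ.image (map f))

def pullPartition (C : Finset (Fin N)) (f : Fin k ↪ Fin N) (π : Finset (Finset (Fin N))) :
    Finset (Finset (Fin k)) :=
  (π.erase C).image fun B => B.preimage f f.injective.injOn

variable {C : Finset (Fin N)} {f : Fin k ↪ Fin N} {σ : Finset (Finset (Fin k))}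
  {π : Finset (Finset (Fin N))}

theorem map_ne_of_nonempty (hC : ∀ x, x ∈ C ↔ x ∉ Set.range f) {B : Finset (Fin k)}
    (hB : B.Nonempty) : B.map f ≠ C := by
  obtain ⟨j, hj⟩ := hB
  intro h
  exact (hC (f j)).1 (h ▸ mem_map_of_mem f hj) ⟨j, rfl⟩

theorem isPartition_pushPartition (hC : ∀ x, x ∈ C ↔ x ∉ Set.range f)
    (hσ : IsPartition σ) (hCne : C.Nonempty) : IsPartition (pushPartition C f σ) := by
  refine ⟨?_, fun x => ?_⟩
  · simp only [pushPartition, mem_insert, mem_image]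
    rintro B (rfl | ⟨B, hB, rfl⟩)
    exacts [hCne, (hσ.1 B hB).map]
  by_cases hx : x ∈ C
  · refine ⟨C, ⟨mem_insert_self _ _, hx⟩, ?_⟩
    simp only [pushPartition, mem_insert, mem_image]
    rintro _ ⟨rfl | ⟨B, -, rfl⟩, hxB⟩
    · rfl
    · obtain ⟨j, -, rfl⟩ := mem_map.1 hxB
      exact ((hC _).1 hx ⟨j, rfl⟩).elim
  · obtain ⟨j, rfl⟩ := not_not.1 (mt (hC x).2 hx)
    obtain ⟨B, ⟨hB, hjB⟩, -⟩ := hσ.2 j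
    refine ⟨B.map f, ⟨mem_insert_of_mem (mem_image_of_mem _ hB), mem_map_of_mem f hjB⟩, ?_⟩
    simp only [pushPartition, mem_insert, mem_image]
    rintro _ ⟨rfl | ⟨B', hB', rfl⟩, hjB'⟩
    · exact (hx hjB').elim
    · rw [hσ.eq_of_mem hB' hB (mem_map' f |>.1 hjB') hjB]

theorem isPartition_of_pushPartition (hC : ∀ x, x ∈ C ↔ x ∉ Set.range f)
    (h : IsPartition (pushPartition C f σ)) : IsPartition σ := by
  have mem_push {B} (hB : B ∈ σ) : B.map f ∈ pushPartition C f σ :=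
    mem_insert_of_mem (mem_image_of_mem _ hB)
  refine ⟨fun B hB => map_nonempty.1 (h.1 _ (mem_push hB)), fun j => ?_⟩
  obtain ⟨D, ⟨hD, hjD⟩, -⟩ := h.2 (f j)
  obtain rfl | ⟨B, hB, rfl⟩ := by simpa only [pushPartition, mem_insert, mem_image] using hD
  · exact ((hC _).1 hjD ⟨j, rfl⟩).elim
  refine ⟨B, ⟨hB, (mem_map' f).1 hjD⟩, fun B' ⟨hB', hjB'⟩ => map_injective f ?_⟩
  exact h.eq_of_mem (mem_push hB') (mem_push hB) (mem_map_of_mem f hjB') hjD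

theorem map_preimage_eq (hC : ∀ x, x ∈ C ↔ x ∉ Set.range f) (hπ : IsPartition π)
    (hCπ : C ∈ π) {B : Finset (Fin N)} (hB : B ∈ π) (hBC : B ≠ C) :
    (B.preimage f f.injective.injOn).map f = B := by
  rw [map_eq_image, image_preimage, filter_true_of_mem]
  intro x hx
  by_contra hxf
  exact hBC (hπ.eq_of_mem hB hCπ hx ((hC x).2 hxf))

theorem pullPartition_pushPartition (hC : ∀ x, x ∈ C ↔ x ∉ Set.range f)
    (hσ : ∀ B ∈ σ, B.Nonempty) : pullPartition C f (pushPartition C f σ) = σ := by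
  rw [pullPartition, pushPartition, erase_insert, image_image]
  · exact (image_congr fun B _ => preimage_map f B).trans image_id
  · simp only [mem_image, not_exists, not_and]
    exact fun B hB => map_ne_of_nonempty hC (hσ B hB)

theorem pushPartition_pullPartition (hC : ∀ x, x ∈ C ↔ x ∉ Set.range f)
    (hπ : IsPartition π) (hCπ : C ∈ π) : pushPartition C f (pullPartition C f π) = π := by
  rw [pushPartition, pullPartition, image_image, image_congr, image_id, insert_erase hCπ]
  intro B hB
  exact map_preimage_eq hC hπ hCπ (mem_of_mem_erase hB) (ne_of_mem_erase hB)

theorem pushPartition_mem_P12_iff (hC : ∀ x, x ∈ C ↔ x ∉ Set.range f)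
    (hCcard : C.card = 1 ∨ C.card = 2) : pushPartition C f σ ∈ P12 N ↔ σ ∈ P12 k := by
  simp only [P12, mem_filter, mem_univ, true_and, pushPartition, forall_mem_insert,
    forall_mem_image, card_map]
  constructor
  · rintro ⟨h, -, hcard⟩
    exact ⟨isPartition_of_pushPartition hC h, hcard⟩
  · rintro ⟨h, hcard⟩
    exact ⟨isPartition_pushPartition hC h (card_pos.1 (by omega)), hCcard, hcard⟩

theorem sum_filter_mem_P12_eq (hC : ∀ x, x ∈ C ↔ x ∉ Set.range f)
    (hCcard : C.card = 1 ∨ C.card = 2) {β : Type*} [AddCommMonoid β]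
    (g : Finset (Finset (Fin N)) → β) :
    ∑ π ∈ (P12 N).filter (C ∈ ·), g π = ∑ σ ∈ P12 k, g (pushPartition C f σ) := by
  have push_pull {π} (hπ : π ∈ (P12 N).filter (C ∈ ·)) :
      pushPartition C f (pullPartition C f π) = π :=
    pushPartition_pullPartition hC (isPartition_of_mem_P12 (mem_filter.1 hπ).1)
      (mem_filter.1 hπ).2
  refine sum_nbij' (pullPartition C f) (pushPartition C f) (fun π hπ => ?_)
    (fun σ hσ => ?_) (fun π hπ => push_pull hπ) (fun σ hσ => ?_)
    (fun π hπ => by rw [push_pull hπ])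
  · rw [← pushPartition_mem_P12_iff hC hCcard, push_pull hπ]
    exact (mem_filter.1 hπ).1
  · exact mem_filter.2 ⟨(pushPartition_mem_P12_iff hC hCcard).2 hσ, mem_insert_self _ _⟩
  · exact pullPartition_pushPartition hC (isPartition_of_mem_P12 hσ).1

end Transfer

section Expansion

variable {M : Type*} [Ring M] {k N : ℕ} {C : Finset (Fin N)} {f : Fin k ↪ Fin N}
  {σ : Finset (Finset (Fin k))}

theorem aProd_map (hf : StrictMono f) (a : Fin N → M) (B : Finset (Fin k)) :
    aProd a (B.map f) = aProd (a ∘ f) B := by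
  rw [aProd, aProd, ← (hf.strictMonoOn _).map_finsetSort, List.map_map]

theorem aProd_pair {n : ℕ} (a : Fin n → M) {x y : Fin n} (h : x < y) :
    aProd a {x, y} = a x * a y := by
  simp [aProd, sort_pair h]

variable [Algebra ℂ M]

-- `(-1)^{|Pair(π)|} ∏_{{i<j} ∈ Pair(π)} E(a_i a_j)`, with one sign absorbed into each pair.
def wickCoeff (E : M →ₗ[ℂ] ℂ) {n : ℕ} (a : Fin n → M) (π : Finset (Finset (Fin n))) : ℂ :=
  ∏ B ∈ π.filter (·.card = 2), -E (aProd a B)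

def wickWord {n : ℕ} (a : Fin n → M) (π : Finset (Finset (Fin n))) : TensorAlgebra ℂ M :=
  ((singL π).map fun v => TensorAlgebra.ι ℂ (a v)).prod

def wickSum (E : M →ₗ[ℂ] ℂ) (n : ℕ) (a : Fin n → M) : TensorAlgebra ℂ M :=
  ∑ π ∈ P12 n, wickCoeff E a π • wickWord a π

theorem wickCoeff_pushPartition_of_card_eq_one (hf : StrictMono f) (E : M →ₗ[ℂ] ℂ)
    (a : Fin N → M) (hC1 : C.card = 1) :
    wickCoeff E a (pushPartition C f σ) = wickCoeff E (a ∘ f) σ := by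
  simp [wickCoeff, pushPartition, filter_insert, hC1, filter_image, prod_image, aProd_map hf]

theorem wickCoeff_pushPartition_of_card_eq_two (hf : StrictMono f) (E : M →ₗ[ℂ] ℂ)
    (a : Fin N → M) (hC : ∀ x, x ∈ C ↔ x ∉ Set.range f) (hσ : ∀ B ∈ σ, B.Nonempty)
    (hC2 : C.card = 2) :
    wickCoeff E a (pushPartition C f σ) = -E (aProd a C) * wickCoeff E (a ∘ f) σ := by
  have hCσ : C ∉ (σ.image (map f)).filter (·.card = 2) := fun h =>
    have ⟨B, hB, hBC⟩ := mem_image.1 (mem_filter.1 h).1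
    map_ne_of_nonempty hC (hσ B hB) hBC
  rw [wickCoeff, pushPartition, filter_insert, if_pos hC2, prod_insert hCσ]
  simp [wickCoeff, filter_image, prod_image, aProd_map hf]

theorem singleton_mem_image_map_iff {x : Fin N} :
    {x} ∈ σ.image (map f) ↔ ∃ j, {j} ∈ σ ∧ f j = x := by
  simp only [mem_image]
  constructor
  · rintro ⟨B, hB, hBx⟩
    obtain ⟨j, rfl⟩ := card_eq_one.1 (by simpa using congrArg card hBx)
    exact ⟨j, hB, by simpa using hBx⟩
  · rintro ⟨j, hj, rfl⟩
    exact ⟨{j}, hj, map_singleton f j⟩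

theorem singL_pushPartition (hf : StrictMono f) (hCcard : 1 < C.card) :
    singL (pushPartition C f σ) = (singL σ).map f := by
  have hsing : univ.filter (fun x => {x} ∈ pushPartition C f σ) =
      (univ.filter fun j => {j} ∈ σ).map f := by
    ext x
    simp only [pushPartition, mem_insert, singleton_mem_image_map_iff, mem_filter, mem_univ,
      true_and, mem_map]
    refine or_iff_right fun h => ?_
    simp [← h] at hCcard
  rw [singL, singL, hsing, (hf.strictMonoOn _).map_finsetSort]

theorem singL_pushPartition_singleton (hf : StrictMono f) {c : Fin N} (hc : ∀ j, f j < c) :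
    singL (pushPartition {c} f σ) = (singL σ).map f ++ [c] := by
  have hsing : univ.filter (fun x => {x} ∈ pushPartition {c} f σ) =
      insert c ((univ.filter fun j => {j} ∈ σ).map f) := by
    ext x
    simp only [pushPartition, mem_insert, singleton_inj, singleton_mem_image_map_iff, mem_filter,
      mem_univ, true_and, mem_map]
  rw [singL, singL, hsing, sort_insert_of_forall_lt (by simpa using fun j _ => hc j),
    (hf.strictMonoOn _).map_finsetSort]

theorem wickWord_pushPartition (hf : StrictMono f) (a : Fin N → M) (hCcard : 1 < C.card) :
    wickWord a (pushPartition C f σ) = wickWord (a ∘ f) σ := by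
  rw [wickWord, singL_pushPartition hf hCcard, List.map_map]
  rfl

theorem wickWord_pushPartition_singleton (hf : StrictMono f) (a : Fin N → M) {c : Fin N}
    (hc : ∀ j, f j < c) :
    wickWord a (pushPartition {c} f σ) = wickWord (a ∘ f) σ * TensorAlgebra.ι ℂ (a c) := by
  simp only [wickWord, singL_pushPartition_singleton hf hc, List.map_append, List.prod_append,
    List.map_map, List.map_singleton, List.prod_singleton]
  rfl

end Expansion

section Recursion

variable {n : ℕ}

theorem pair_castSucc_last_injective :
    Function.Injective fun i : Fin n => ({i.castSucc, Fin.last n} : Finset (Fin (n + 1))) :=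
  fun _ _ h => Fin.castSucc_injective _ <| (insert_inj (by simp [Fin.castSucc_ne_last])).1 h

theorem singleton_last_mem_or_pair_mem {π : Finset (Finset (Fin (n + 1)))}
    (hπ : π ∈ P12 (n + 1)) : {Fin.last n} ∈ π ∨ ∃ i : Fin n, {i.castSucc, Fin.last n} ∈ π := by
  obtain ⟨B, ⟨hB, hlast⟩, -⟩ := (isPartition_of_mem_P12 hπ).2 (Fin.last n)
  have hB' := insert_erase hlast
  rcases (mem_filter.1 hπ).2.2 B hB with h1 | h2
  · have h0 : B.erase (Fin.last n) = ∅ := card_eq_zero.1 (by rw [card_erase_of_mem hlast, h1])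
    left
    rwa [← hB', h0, insert_empty] at hB
  · rw [← hB'] at hB
    obtain ⟨y, hy⟩ := card_eq_one.1 (by rw [card_erase_of_mem hlast, h2])
    obtain ⟨j, rfl⟩ := Fin.exists_castSucc_eq.2 (ne_of_mem_erase (hy ▸ mem_singleton_self y))
    exact Or.inr ⟨j, by rwa [hy, pair_comm] at hB⟩

def partner (π : Finset (Finset (Fin (n + 1)))) : Option (Fin n) :=
  if h : ∃ i : Fin n, {i.castSucc, Fin.last n} ∈ π then some h.choose else none

theorem partner_eq_some_iff {π : Finset (Finset (Fin (n + 1)))} (hπ : IsPartition π)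
    {i : Fin n} : partner π = some i ↔ {i.castSucc, Fin.last n} ∈ π := by
  constructor
  · intro h
    rw [partner] at h
    split_ifs at h with hex
    exact Option.some_injective _ h ▸ hex.choose_spec
  · intro h
    have hex : ∃ i : Fin n, {i.castSucc, Fin.last n} ∈ π := ⟨i, h⟩
    rw [partner, dif_pos hex]
    exact congrArg some <| pair_castSucc_last_injective <|
      hπ.eq_of_mem hex.choose_spec h (mem_insert_of_mem (mem_singleton_self _))
        (mem_insert_of_mem (mem_singleton_self _))

theorem partner_eq_none_iff {π : Finset (Finset (Fin (n + 1)))} (hπ : π ∈ P12 (n + 1)) :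
    partner π = none ↔ {Fin.last n} ∈ π := by
  have hnone : partner π = none ↔ ¬∃ i : Fin n, {i.castSucc, Fin.last n} ∈ π := by
    simp [partner]
  rw [hnone]
  refine ⟨(singleton_last_mem_or_pair_mem hπ).resolve_right, fun h ⟨i, hi⟩ => ?_⟩
  have hpair := (isPartition_of_mem_P12 hπ).eq_of_mem hi h
    (mem_insert_of_mem (mem_singleton_self _)) (mem_singleton_self _)
  exact Fin.castSucc_ne_last i (mem_singleton.1 (hpair ▸ mem_insert_self _ _))

theorem sum_P12_succ {β : Type*} [AddCommMonoid β] (t : Finset (Finset (Fin (n + 1))) → β) :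
    ∑ π ∈ P12 (n + 1), t π = ∑ π ∈ (P12 (n + 1)).filter ({Fin.last n} ∈ ·), t π
      + ∑ i : Fin n, ∑ π ∈ (P12 (n + 1)).filter ({i.castSucc, Fin.last n} ∈ ·), t π := by
  rw [← sum_fiberwise (P12 (n + 1)) partner t, Fintype.sum_option]
  congr 1
  · exact sum_congr (filter_congr fun π hπ => partner_eq_none_iff hπ) fun _ _ => rfl
  · refine sum_congr rfl fun i _ => sum_congr (filter_congr fun π hπ => ?_) fun _ _ => rfl
    exact partner_eq_some_iff (isPartition_of_mem_P12 hπ)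

variable {M : Type*} [Ring M] [Algebra ℂ M] (E : M →ₗ[ℂ] ℂ)

theorem sum_filter_singleton_last_mem (a : Fin (n + 1) → M) :
    ∑ π ∈ (P12 (n + 1)).filter ({Fin.last n} ∈ ·), wickCoeff E a π • wickWord a π
      = wickSum E n (Fin.init a) * TensorAlgebra.ι ℂ (a (Fin.last n)) := by
  have hC (x : Fin (n + 1)) : x ∈ ({Fin.last n} : Finset _) ↔ x ∉ Set.range Fin.castSuccEmb := by
    induction x using Fin.lastCases <;> simp [Fin.castSucc_ne_last]
  have hf : StrictMono (Fin.castSuccEmb : Fin n ↪ Fin (n + 1)) := Fin.strictMono_castSucc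
  rw [sum_filter_mem_P12_eq hC (Or.inl (card_singleton _)), wickSum, sum_mul]
  refine sum_congr rfl fun σ _ => ?_
  rw [wickCoeff_pushPartition_of_card_eq_one hf E a (card_singleton _),
    wickWord_pushPartition_singleton hf a Fin.castSucc_lt_last, smul_mul_assoc]
  rfl

theorem sum_filter_pair_last_mem (a : Fin (n + 2) → M) (i : Fin (n + 1)) :
    ∑ π ∈ (P12 (n + 2)).filter ({i.castSucc, Fin.last (n + 1)} ∈ ·),
        wickCoeff E a π • wickWord a π
      = -E (a i.castSucc * a (Fin.last (n + 1))) • wickSum E n (i.removeNth (Fin.init a)) := by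
  set f : Fin n ↪ Fin (n + 2) := (Fin.succAboveEmb i).trans Fin.castSuccEmb
  have hC (x : Fin (n + 2)) :
      x ∈ ({i.castSucc, Fin.last (n + 1)} : Finset _) ↔ x ∉ Set.range f := by
    induction x using Fin.lastCases with
    | last => simp [f, Fin.castSucc_ne_last]
    | cast y => simp [f, eq_comm (a := y)]
  have hf : StrictMono f := Fin.strictMono_castSucc.comp (Fin.strictMono_succAbove i)
  have hC2 : ({i.castSucc, Fin.last (n + 1)} : Finset _).card = 2 :=
    card_pair (Fin.castSucc_ne_last i)
  rw [sum_filter_mem_P12_eq hC (Or.inr hC2), wickSum, smul_sum]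
  refine sum_congr rfl fun σ hσ => ?_
  rw [wickCoeff_pushPartition_of_card_eq_two hf E a hC (isPartition_of_mem_P12 hσ).1 hC2,
    wickWord_pushPartition hf a (by omega), aProd_pair a (Fin.castSucc_lt_last i), mul_smul]
  rfl

theorem wickSum_zero (a : Fin 0 → M) : wickSum E 0 a = 1 := by
  simp [wickSum, P12_zero, wickCoeff, wickWord, singL]

theorem wickSum_one (a : Fin 1 → M) :
    wickSum E 1 a = wickSum E 0 (Fin.init a) * TensorAlgebra.ι ℂ (a 0) := by
  rw [wickSum, sum_P12_succ, Fin.sum_univ_zero, add_zero, sum_filter_singleton_last_mem]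
  rfl

theorem wickSum_succ_succ (a : Fin (n + 2) → M) :
    wickSum E (n + 2) a
      = wickSum E (n + 1) (Fin.init a) * TensorAlgebra.ι ℂ (a (Fin.last (n + 1)))
          - ∑ i : Fin (n + 1), E (a i.castSucc * a (Fin.last (n + 1))) •
            wickSum E n (i.removeNth (Fin.init a)) := by
  simp only [wickSum, sum_P12_succ, sum_filter_singleton_last_mem, sum_filter_pair_last_mem,
    neg_smul, sum_neg_distrib, sub_eq_add_neg]

end Recursion

end WickFormula

theorem stmt8 {M : Type*} [Ring M] [Algebra ℂ M] (E : M →ₗ[ℂ] ℂ)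
    (W : (m : ℕ) → (Fin m → M) → TensorAlgebra ℂ M)
    (hW0 : ∀ a : Fin 0 → M, W 0 a = 1)
    (hW1 : ∀ a : Fin 1 → M, W 1 a = W 0 (Fin.init a) * TensorAlgebra.ι ℂ (a 0))
    (hWrec : ∀ (m : ℕ) (a : Fin (m + 2) → M),
      W (m + 2) a =
        W (m + 1) (Fin.init a) * TensorAlgebra.ι ℂ (a (Fin.last (m + 1)))
          - ∑ i : Fin (m + 1),
              E (a i.castSucc * a (Fin.last (m + 1))) • W m (i.removeNth (Fin.init a)))
    (n : ℕ) (a : Fin n → M) :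
    W n a
      = ∑ π ∈ Finset.univ.filter (fun π : Finset (Finset (Fin n)) =>
            IsPartition π ∧ ∀ B ∈ π, B.card = 1 ∨ B.card = 2),
          ((-1 : ℂ) ^ (π.filter fun B => B.card = 2).card
              * ∏ B ∈ π.filter fun B => B.card = 2, E (aProd a B)) •
            ((singL π).map fun v => TensorAlgebra.ι ℂ (a v)).prod := by
  have hW : ∀ m (b : Fin m → M), W m b = WickFormula.wickSum E m b := by
    refine Nat.twoStepInduction (fun b => ?_) (fun b => ?_) fun m ih₀ ih₁ b => ?_
    · rw [hW0, WickFormula.wickSum_zero]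
    · rw [hW1, hW0, WickFormula.wickSum_one, WickFormula.wickSum_zero]
    · simp only [hWrec, ih₀, ih₁, WickFormula.wickSum_succ_succ]
  rw [hW, WickFormula.wickSum]
  exact sum_congr rfl fun π _ => by rw [WickFormula.wickCoeff, prod_neg]; rfl
end
end
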